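/- arXiv:math/0008208 — 8 statements merged into one kernel-verified Lean document; each statement's English description precedes it below -/
import Mathlib

section
/- Let τ ≥ s₀ be a real random variable whose distribution function F_τ(s) = P(τ < s) satisfies F_τ(s) ≥ G(s) for a continuously differentiable function G with G(s₀) ≤ 0. Let g : ℝ → [0,1] be continuously differentiable and increasing on (s₀, s₁) and equal to 1 on [s₁, ∞). Then for all t > s₀: E[1_{[s₀,t)}(τ) g(τ)] ≤ g(t)(F_τ(t) − G(t)) + ∫_{s₀}^t g(s) G'(s) ds. -/
/-!
Write `F s = μ(τ < s)`. Since `h(x) - h(a) = ∫_{a < s ≤ x} h'(s) ds`, Fubini turns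
`E[1_{[a,t)}(τ) h(τ)]` into the Stieltjes integration by parts formula
`h(t) F(t) - h(a) F(a) - ∫_a^t h' F`. For `h = g` we have `g' ≥ 0`, because `g` is monotone on
`[s₀, ∞)`, so replacing `F` by `G ≤ F` in `-∫ g' F` only increases the right-hand side. Integrating
`∫ g' G` by parts and using `g(s₀) F(s₀) ≥ 0 ≥ g(s₀) G(s₀)` gives the bound.
Since `g` need not be differentiable at `s₁`, the fundamental theorem of calculus is used in its
form that allows a countable exceptional set.
-/

open MeasureTheory Set Filter Topology

section DistributionFunction

variable {Ω : Type*} [MeasurableSpace Ω] {μ : Measure Ω} [IsFiniteMeasure μ] {τ : Ω → ℝ}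
  {h h' : ℝ → ℝ} {a t : ℝ}

theorem integral_indicator_Ico_comp_sub_eq (hτ : Measurable τ) (hat : a ≤ t)
    (hh' : IntervalIntegrable h' volume a t)
    (hftc : ∀ b ∈ Ico a t, ∫ s in a..b, h' s = h b - h a) :
    ∫ ω, (Ico a t).indicator (fun x => h x - h a) (τ ω) ∂μ
      = ∫ s in a..t, h' s * μ.real (τ ⁻¹' Ico s t) := by
  classical
  set S : Set (Ω × ℝ) := {p | a < p.2 ∧ p.2 ≤ τ p.1 ∧ τ p.1 < t}
  set f : Ω × ℝ → ℝ := S.indicator fun p => (Ioc a t).indicator h' p.2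
  have hS : MeasurableSet S :=
    (measurableSet_lt measurable_const measurable_snd).inter
      ((measurableSet_le measurable_snd (hτ.comp measurable_fst)).inter
        (measurableSet_lt (hτ.comp measurable_fst) measurable_const))
  have hf : Integrable f (μ.prod volume) :=
    ((hh'.1.integrable_indicator measurableSet_Ioc).comp_snd μ).indicator hS
  have hω : ∀ ω, ∫ s, f (ω, s) = (Ico a t).indicator (fun x => h x - h a) (τ ω) := by
    intro ω
    by_cases hτω : τ ω ∈ Ico a t
    · have : (fun s => f (ω, s)) = (Ioc a (τ ω)).indicator h' := by
        ext s
        simp only [f, S, indicator_apply, mem_ofPred_eq, mem_Ioc]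
        split_ifs <;> grind
      rw [this, integral_indicator measurableSet_Ioc, ← intervalIntegral.integral_of_le hτω.1,
        hftc _ hτω, indicator_of_mem hτω]
    · have : (fun s => f (ω, s)) = fun _ => 0 := by
        ext s
        simp only [f, S, indicator_apply, mem_ofPred_eq]
        split_ifs <;> grind
      simp [this, hτω]
  have hs : ∀ s, ∫ ω, f (ω, s) ∂μ
      = (Ioc a t).indicator (fun s => h' s * μ.real (τ ⁻¹' Ico s t)) s := by
    intro s
    have : (fun ω => f (ω, s)) = (τ ⁻¹' Ico s t).indicator fun _ => (Ioc a t).indicator h' s := by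
      ext ω
      simp only [f, S, indicator_apply, mem_ofPred_eq, mem_preimage, mem_Ico, mem_Ioc]
      split_ifs <;> grind
    rw [this, integral_indicator_const _ (hτ measurableSet_Ico), smul_eq_mul]
    by_cases hs : s ∈ Ioc a t <;> simp [hs, mul_comm]
  calc ∫ ω, (Ico a t).indicator (fun x => h x - h a) (τ ω) ∂μ
      = ∫ ω, ∫ s, f (ω, s) ∂volume ∂μ := by simp_rw [hω]
    _ = ∫ s, ∫ ω, f (ω, s) ∂μ := integral_integral_swap hf
    _ = ∫ s in a..t, h' s * μ.real (τ ⁻¹' Ico s t) := by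
      simp_rw [hs]
      rw [integral_indicator measurableSet_Ioc, intervalIntegral.integral_of_le hat]

theorem measureReal_preimage_Ico_eq_sub (hτ : Measurable τ) {s : ℝ} (hst : s ≤ t) :
    μ.real (τ ⁻¹' Ico s t) = μ.real (τ ⁻¹' Iio t) - μ.real (τ ⁻¹' Iio s) := by
  rw [← measureReal_sdiff (preimage_mono (Iio_subset_Iio hst)) (hτ measurableSet_Iio),
    ← preimage_sdiff, Iio_sdiff_Iio]

theorem IntervalIntegrable.mul_measureReal_preimage_Iio (hh' : IntervalIntegrable h' volume a t) :
    IntervalIntegrable (fun s => h' s * μ.real (τ ⁻¹' Iio s)) volume a t := by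
  have hF : Measurable fun s => μ.real (τ ⁻¹' Iio s) :=
    Monotone.measurable fun s s' hss' => measureReal_mono (preimage_mono (Iio_subset_Iio hss'))
  have hbound : ∀ s, ‖μ.real (τ ⁻¹' Iio s)‖ ≤ μ.real univ := fun s => by
    rw [Real.norm_of_nonneg measureReal_nonneg]
    exact measureReal_mono (subset_univ _)
  exact ⟨hh'.1.mul_bdd hF.aestronglyMeasurable (.of_forall hbound),
    hh'.2.mul_bdd hF.aestronglyMeasurable (.of_forall hbound)⟩

theorem integral_indicator_Ico_comp_eq (hτ : Measurable τ) (hat : a ≤ t) {s : Set ℝ}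
    (hs : s.Countable) (hh : ContinuousOn h (Icc a t))
    (hderiv : ∀ x ∈ Ioo a t \ s, HasDerivAt h (h' x) x) (hh' : IntervalIntegrable h' volume a t) :
    ∫ ω, (Ico a t).indicator h (τ ω) ∂μ
      = h t * μ.real (τ ⁻¹' Iio t) - h a * μ.real (τ ⁻¹' Iio a)
        - ∫ x in a..t, h' x * μ.real (τ ⁻¹' Iio x) := by
  have hftc : ∀ b ∈ Icc a t, ∫ x in a..b, h' x = h b - h a := fun b hb =>
    integral_eq_of_hasDerivAt_off_countable_of_le h h' hb.1 hs (hh.mono (Icc_subset_Icc_right hb.2))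
      (fun x hx => hderiv x ⟨⟨hx.1.1, hx.1.2.trans_le hb.2⟩, hx.2⟩)
      (hh'.mono_set (by rw [uIcc_of_le hb.1, uIcc_of_le hat]; exact Icc_subset_Icc_right hb.2))
  have hintegrable : ∀ f : ℝ → ℝ, ContinuousOn f (Icc a t) →
      Integrable (fun ω => (Ico a t).indicator f (τ ω)) μ := fun f hf =>
    Integrable.comp_measurable
      (((hf.integrableOn_compact isCompact_Icc).mono_set Ico_subset_Icc_self).integrable_indicator
        measurableSet_Ico) hτ
  have hsub := integral_indicator_Ico_comp_sub_eq (μ := μ) hτ hat hh'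
    (fun b hb => hftc b (Ico_subset_Icc_self hb))
  simp_rw [indicator_sub] at hsub
  rw [integral_sub (hintegrable h hh) (hintegrable _ continuousOn_const)] at hsub
  have hconst : ∫ ω, (Ico a t).indicator (fun _ => h a) (τ ω) ∂μ
      = h a * μ.real (τ ⁻¹' Ico a t) := by
    have : ∀ ω, (Ico a t).indicator (fun _ => h a) (τ ω)
        = (τ ⁻¹' Ico a t).indicator (fun _ => h a) ω := fun ω => (indicator_comp_right τ).symm
    simp_rw [this]
    rw [integral_indicator_const _ (hτ measurableSet_Ico), smul_eq_mul, mul_comm]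
  calc ∫ ω, (Ico a t).indicator h (τ ω) ∂μ
      = (∫ x in a..t, h' x * μ.real (τ ⁻¹' Ico x t)) + h a * μ.real (τ ⁻¹' Ico a t) := by
        rw [← hsub, hconst]
        ring
    _ = (∫ x in a..t, h' x * μ.real (τ ⁻¹' Iio t) - h' x * μ.real (τ ⁻¹' Iio x))
        + h a * (μ.real (τ ⁻¹' Iio t) - μ.real (τ ⁻¹' Iio a)) := by
        rw [measureReal_preimage_Ico_eq_sub hτ hat]
        congr 1
        refine intervalIntegral.integral_congr fun x hx => ?_
        rw [uIcc_of_le hat] at hx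
        rw [measureReal_preimage_Ico_eq_sub hτ hx.2, mul_sub]
    _ = _ := by
        rw [intervalIntegral.integral_sub (hh'.mul_const _) hh'.mul_measureReal_preimage_Iio,
          intervalIntegral.integral_mul_const, hftc t ⟨hat, le_rfl⟩]
        ring

end DistributionFunction

theorem integral_mul_deriv_eq_deriv_mul_of_hasDerivAt_off_countable {u u' v v' : ℝ → ℝ}
    {a b : ℝ} {s : Set ℝ} (hab : a ≤ b) (hs : s.Countable)
    (hu : ContinuousOn u (Icc a b)) (hv : ContinuousOn v (Icc a b))
    (huu' : ∀ x ∈ Ioo a b \ s, HasDerivAt u (u' x) x)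
    (hvv' : ∀ x ∈ Ioo a b \ s, HasDerivAt v (v' x) x)
    (hu' : IntervalIntegrable u' volume a b) (hv' : IntervalIntegrable v' volume a b) :
    ∫ x in a..b, u x * v' x = u b * v b - u a * v a - ∫ x in a..b, u' x * v x := by
  have h₁ : IntervalIntegrable (fun x => u' x * v x) volume a b :=
    hu'.mul_continuousOn (uIcc_of_le hab ▸ hv)
  have h₂ : IntervalIntegrable (fun x => u x * v' x) volume a b :=
    hv'.continuousOn_mul (uIcc_of_le hab ▸ hu)
  have := integral_eq_of_hasDerivAt_off_countable_of_le (fun x => u x * v x) _ hab hs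
    (hu.mul hv) (fun x hx => (huu' x hx).mul (hvv' x hx)) (h₁.add h₂)
  rw [intervalIntegral.integral_add h₁ h₂] at this
  linarith

theorem MonotoneOn.deriv_nonneg_of_mem_nhds {g : ℝ → ℝ} {s : Set ℝ} {x : ℝ}
    (hg : MonotoneOn g s) (hx : s ∈ 𝓝 x) : 0 ≤ deriv g x :=
  derivWithin_of_mem_nhds (𝕜 := ℝ) (f := g) hx ▸ hg.derivWithin_nonneg

section EventuallyConstant

variable {g : ℝ → ℝ} {a b c : ℝ}

theorem monotoneOn_Ici_of_monotoneOn_Ioo_of_eqOn_Ici (hg : Continuous g)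
    (hmono : MonotoneOn g (Ioo a b)) (hc : EqOn g (fun _ => c) (Ici b)) :
    MonotoneOn g (Ici a) := by
  have hconst : MonotoneOn g (Ici b) := fun x hx y hy _ => by rw [hc hx, hc hy]
  rcases lt_or_ge a b with hab | hab
  · have hIco : MonotoneOn g (Ico a b) := by
      rw [← Ioo_insert_left hab]
      exact hmono.insert_of_continuousWithinAt (left_nhdsWithin_Ioo_neBot hab)
        hg.continuousWithinAt
    have hIcc : MonotoneOn g (Icc a b) := by
      rw [← Ico_insert_right hab.le]
      exact hIco.insert_of_continuousWithinAt (right_nhdsWithin_Ico_neBot hab)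
        hg.continuousWithinAt
    rw [← Icc_union_Ici_eq_Ici hab.le]
    exact hIcc.union_right hconst (isGreatest_Icc hab.le) isLeast_Ici
  · exact hconst.mono (Ici_subset_Ici.2 hab)

theorem hasDerivAt_deriv_of_differentiableAt_Ioo_of_eqOn_Ici
    (hdiff : ∀ x ∈ Ioo a b, DifferentiableAt ℝ g x) (hc : EqOn g (fun _ => c) (Ici b)) :
    ∀ x ∈ Ioi a \ {b}, HasDerivAt g (deriv g x) x := by
  rintro x ⟨hax, hxb⟩
  rcases lt_or_gt_of_ne hxb with hxb | hbx
  · exact (hdiff x ⟨hax, hxb⟩).hasDerivAt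
  · refine ((differentiableAt_const c).congr_of_eventuallyEq ?_).hasDerivAt
    filter_upwards [Ioi_mem_nhds hbx] with y hy using hc (mem_Ici.2 hy.le)

end EventuallyConstant

theorem stmt1_general
    {Ω : Type*} [MeasurableSpace Ω] (μ : Measure Ω) [IsProbabilityMeasure μ]
    (τ : Ω → ℝ) (hτmeas : Measurable τ)
    (s₀ s₁ t : ℝ) (ht : s₀ < t)
    (G : ℝ → ℝ) (hG : ContDiff ℝ 1 G) (hGs₀ : G s₀ ≤ 0)
    (hFG : ∀ s, G s ≤ (μ {ω | τ ω < s}).toReal)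
    (g : ℝ → ℝ) (hgcont : Continuous g)
    (hg0 : ∀ s, 0 ≤ g s)
    (hgdiff : ∀ s ∈ Set.Ioo s₀ s₁, DifferentiableAt ℝ g s)
    (hgmono : MonotoneOn g (Set.Ioo s₀ s₁))
    (hg1 : ∀ s, s₁ ≤ s → g s = 1) :
    ∫ ω, (Set.Ico s₀ t).indicator (fun _ => (1:ℝ)) (τ ω) * g (τ ω) ∂μ
      ≤ g t * ((μ {ω | τ ω < t}).toReal - G t)
        + ∫ s in s₀..t, g s * deriv G s := by
  change _ ≤ g t * (μ.real (τ ⁻¹' Iio t) - G t) + _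
  replace hFG : ∀ s, G s ≤ μ.real (τ ⁻¹' Iio s) := hFG
  have hmono := monotoneOn_Ici_of_monotoneOn_Ioo_of_eqOn_Ici hgcont hgmono (c := 1) hg1
  have hderiv : ∀ x ∈ Ioo s₀ t \ {s₁}, HasDerivAt g (deriv g x) x := fun x hx =>
    hasDerivAt_deriv_of_differentiableAt_Ioo_of_eqOn_Ici hgdiff (c := 1) hg1 x ⟨hx.1.1, hx.2⟩
  have hg' : IntervalIntegrable (deriv g) volume s₀ t :=
    (hmono.mono (uIcc_of_le ht.le ▸ Icc_subset_Ici_self)).intervalIntegrable_deriv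
  have hibp := integral_mul_deriv_eq_deriv_mul_of_hasDerivAt_off_countable ht.le
    (countable_singleton s₁) hgcont.continuousOn hG.continuous.continuousOn hderiv
    (fun x _ => (hG.differentiable one_ne_zero x).hasDerivAt) hg'
    ((hG.continuous_deriv le_rfl).intervalIntegrable _ _)
  have hGF : ∫ s in s₀..t, deriv g s * G s ≤ ∫ s in s₀..t, deriv g s * μ.real (τ ⁻¹' Iio s) :=
    intervalIntegral.integral_mono_on_of_le_Ioo ht.le
      (hg'.mul_continuousOn hG.continuous.continuousOn) hg'.mul_measureReal_preimage_Iio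
      fun x hx => mul_le_mul_of_nonneg_left (hFG x)
        (hmono.deriv_nonneg_of_mem_nhds (Ici_mem_nhds hx.1))
  have hLHS : ∫ ω, (Ico s₀ t).indicator (fun _ => 1) (τ ω) * g (τ ω) ∂μ
      = ∫ ω, (Ico s₀ t).indicator g (τ ω) ∂μ := by
    simp_rw [← indicator_mul_left, one_mul]
  rw [hLHS, integral_indicator_Ico_comp_eq hτmeas ht.le (countable_singleton s₁)
    hgcont.continuousOn hderiv hg']
  have := mul_nonneg (hg0 s₀) (measureReal_nonneg (μ := μ) (s := τ ⁻¹' Iio s₀))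
  have := mul_nonpos_of_nonneg_of_nonpos (hg0 s₀) hGs₀
  linarith

/-- Lemma A.2: integration-by-parts estimate for `E[1_{[s₀,t)}(τ) g(τ)]`. -/
theorem stmt1
    {Ω : Type*} [MeasurableSpace Ω] (μ : Measure Ω) [IsProbabilityMeasure μ]
    (τ : Ω → ℝ) (hτmeas : Measurable τ)
    (s₀ s₁ t : ℝ) (hs₀₁ : s₀ < s₁) (ht : s₀ < t)
    (hτ : ∀ ω, s₀ ≤ τ ω)
    (G : ℝ → ℝ) (hG : ContDiff ℝ 1 G) (hGs₀ : G s₀ ≤ 0)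
    (hFG : ∀ s, G s ≤ (μ {ω | τ ω < s}).toReal)
    (g : ℝ → ℝ) (hgcont : Continuous g)
    (hg0 : ∀ s, 0 ≤ g s) (hg1' : ∀ s, g s ≤ 1)
    (hgdiff : ∀ s ∈ Set.Ioo s₀ s₁, DifferentiableAt ℝ g s)
    (hgmono : MonotoneOn g (Set.Ioo s₀ s₁))
    (hg1 : ∀ s, s₁ ≤ s → g s = 1) :
    ∫ ω, (Set.Ico s₀ t).indicator (fun _ => (1:ℝ)) (τ ω) * g (τ ω) ∂μ
      ≤ g t * ((μ {ω | τ ω < t}).toReal - G t)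
        + ∫ s in s₀..t, g s * deriv G s :=
  stmt1_general μ τ hτmeas s₀ s₁ t ht G hG hGs₀ hFG g hgcont hg0 hgdiff hgmono hg1
end

section
/- Let ā : [0,T] → ℝ be continuously differentiable with −ā₊ ≤ ā(t) ≤ −ā₋ < 0 and |ā'(t)| ≤ c₂ for all t. With ζ as in the previous context, ζ(t) = 1/(2|ā(t)|) + O(ε) uniformly in t ∈ [0,T]; precisely, there is a constant C = C(ā₋, c₂) such that |ζ(t) − 1/(2|ā(t)|)| ≤ Cε for all t ∈ [0,T]. -/
/-!
Writing `e(s) = exp (2 ∫ₛᵗ ā / ε)`, the function `s ↦ -e(s) / (2 ā(s))` has derivative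
`e(s)/ε + e(s) ā'(s) / (2 ā(s)²)`, so integrating it over `[0,t]` gives
`ζ(t) - 1/(2|ā(t)|) = -∫₀ᵗ e(s) ā'(s) / (2 ā(s)²) ds`.
Since `ā ≤ -ā₋`, the kernel satisfies `e(s) ≤ exp (-2 ā₋ (t - s) / ε)`, whose integral is at
most `ε / (2 ā₋)`; with `|ā'| ≤ c₂` the remainder is at most `c₂ ε / (4 ā₋³)`.
-/

open Real

/-- The variance-like function `ζ` of Lemma 3.1 / equation (3.6). -/
noncomputable def zetaFn (abar : ℝ → ℝ) (ε : ℝ) (t : ℝ) : ℝ :=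
  1 / (2 * |abar 0|) * Real.exp (2 * (∫ u in (0:ℝ)..t, abar u) / ε)
    + (1 / ε) * ∫ s in (0:ℝ)..t, Real.exp (2 * (∫ u in s..t, abar u) / ε)

open Set MeasureTheory intervalIntegral Topology

theorem integral_exp_mul_sub_le_inv {a b c : ℝ} (hc : 0 < c) :
    ∫ s in a..b, exp (c * (s - b)) ≤ c⁻¹ := by
  simp_rw [mul_sub]
  rw [integral_comp_mul_sub (fun x => exp x) hc.ne', integral_exp, sub_self, exp_zero,
    smul_eq_mul]
  exact mul_le_of_le_one_right (inv_nonneg.2 hc.le) (by linarith [exp_pos (c * a - c * b)])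

theorem exp_integral_le_of_le_neg {a : ℝ → ℝ} {m ε s t : ℝ} (hε : 0 < ε) (hst : s ≤ t)
    (ha : IntervalIntegrable a volume s t) (hle : ∀ u ∈ Icc s t, a u ≤ -m) :
    exp (2 * (∫ u in s..t, a u) / ε) ≤ exp (2 * m / ε * (s - t)) := by
  have hint : ∫ u in s..t, a u ≤ -m * (t - s) := by
    simpa [mul_comm] using integral_mono_on hst ha intervalIntegrable_const hle
  rw [exp_le_exp, div_mul_eq_mul_div]
  exact div_le_div_of_nonneg_right (by linarith) hε.le

theorem hasDerivAt_neg_exp_integral_div {a : ℝ → ℝ} {a' ε t x : ℝ} (hε : ε ≠ 0)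
    (hint : IntervalIntegrable a volume x t) (hmeas : StronglyMeasurableAtFilter a (𝓝 x))
    (hax : HasDerivAt a a' x) (hne : a x ≠ 0) :
    HasDerivAt (fun s => -exp (2 * (∫ u in s..t, a u) / ε) / (2 * a s))
      (exp (2 * (∫ u in x..t, a u) / ε) / ε
        + exp (2 * (∫ u in x..t, a u) / ε) * (a' / (2 * a x ^ 2))) x := by
  have he : HasDerivAt (fun s => -exp (2 * (∫ u in s..t, a u) / ε))
      (-(exp (2 * (∫ u in x..t, a u) / ε) * (2 * -a x / ε))) x :=
    ((((integral_hasDerivAt_left hint hmeas hax.continuousAt).const_mul 2).div_const ε).exp).neg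
  refine (he.div (hax.const_mul 2) (mul_ne_zero two_ne_zero hne)).congr_deriv ?_
  field_simp
  ring

section

variable {a a' : ℝ → ℝ} {ε t : ℝ}

theorem continuousOn_exp_integral (ht : 0 ≤ t) (ha : ContinuousOn a (Icc 0 t)) :
    ContinuousOn (fun s => exp (2 * (∫ u in s..t, a u) / ε)) (Icc 0 t) := by
  rw [← uIcc_of_le ht] at ha ⊢
  have hφ := continuousOn_primitive_interval_left (μ := volume) ha.integrableOn_Icc
  exact ((continuousOn_const.mul hφ).div_const ε).rexp

theorem intervalIntegrable_exp_integral_mul (ht : 0 ≤ t) (ha : ContinuousOn a (Icc 0 t))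
    (ha' : ContinuousOn a' (Icc 0 t)) (hne : ∀ s ∈ Icc 0 t, a s ≠ 0) :
    IntervalIntegrable (fun s => exp (2 * (∫ u in s..t, a u) / ε) * (a' s / (2 * a s ^ 2)))
      volume 0 t :=
  ((continuousOn_exp_integral ht ha).mul (ha'.div (continuousOn_const.mul (ha.pow 2))
    fun s hs => by simp [hne s hs])).intervalIntegrable_of_Icc ht

theorem zetaFn_sub_eq_neg_integral (hε : ε ≠ 0) (ht : 0 ≤ t) (ha : ContinuousOn a (Icc 0 t))
    (ha' : ContinuousOn a' (Icc 0 t)) (hderiv : ∀ x ∈ Ioo 0 t, HasDerivAt a (a' x) x)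
    (hneg : ∀ s ∈ Icc 0 t, a s < 0) :
    zetaFn a ε t - 1 / (2 * |a t|)
      = -∫ s in 0..t, exp (2 * (∫ u in s..t, a u) / ε) * (a' s / (2 * a s ^ 2)) := by
  have hne : ∀ s ∈ Icc 0 t, a s ≠ 0 := fun s hs => (hneg s hs).ne
  have hecont := continuousOn_exp_integral (ε := ε) ht ha
  have heint := (hecont.intervalIntegrable_of_Icc (μ := volume) ht).div_const ε
  have hint := intervalIntegrable_exp_integral_mul (ε := ε) ht ha ha' hne
  have hFTC := integral_eq_sub_of_hasDerivAt_of_le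
    (f := fun s => -exp (2 * (∫ u in s..t, a u) / ε) / (2 * a s)) ht
    (hecont.neg.div (continuousOn_const.mul ha) fun s hs => mul_ne_zero two_ne_zero (hne s hs))
    (fun x hx => hasDerivAt_neg_exp_integral_div hε
      ((ha.mono (Icc_subset_Icc_left hx.1.le)).intervalIntegrable_of_Icc hx.2.le)
      ((ha.mono Ioo_subset_Icc_self).stronglyMeasurableAtFilter isOpen_Ioo x hx)
      (hderiv x hx) (hne x (Ioo_subset_Icc_self hx)))
    (heint.add hint)
  rw [integral_add heint hint,
    intervalIntegral.integral_div, integral_same, mul_zero, zero_div, exp_zero] at hFTC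
  rw [zetaFn, abs_of_neg (hneg 0 ⟨le_rfl, ht⟩), abs_of_neg (hneg t ⟨ht, le_rfl⟩)]
  have h0 := hne 0 ⟨le_rfl, ht⟩
  have ht' := hne t ⟨ht, le_rfl⟩
  field_simp at hFTC ⊢
  linear_combination hFTC

theorem abs_integral_exp_integral_mul_le {m c : ℝ} (hm : 0 < m) (hε : 0 < ε) (ht : 0 ≤ t)
    (ha : ContinuousOn a (Icc 0 t)) (ha' : ContinuousOn a' (Icc 0 t))
    (hle : ∀ s ∈ Icc 0 t, a s ≤ -m) (hc : ∀ s ∈ Icc 0 t, |a' s| ≤ c) :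
    |∫ s in 0..t, exp (2 * (∫ u in s..t, a u) / ε) * (a' s / (2 * a s ^ 2))|
      ≤ c * ε / (4 * m ^ 3) := by
  have hc0 : 0 ≤ c := (abs_nonneg _).trans (hc 0 ⟨le_rfl, ht⟩)
  have hpt : ∀ s ∈ Icc 0 t, |exp (2 * (∫ u in s..t, a u) / ε) * (a' s / (2 * a s ^ 2))|
      ≤ c / (2 * m ^ 2) * exp (2 * m / ε * (s - t)) := by
    intro s hs
    have hsq : m ^ 2 ≤ a s ^ 2 := by nlinarith [hle s hs]
    rw [abs_mul, abs_of_pos (exp_pos _), abs_div,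
      abs_of_nonneg (by positivity : 0 ≤ 2 * a s ^ 2), mul_comm]
    exact mul_le_mul (div_le_div₀ hc0 (hc s hs) (by positivity) (by linarith))
      (exp_integral_le_of_le_neg hε hs.2
        ((ha.mono (Icc_subset_Icc_left hs.1)).intervalIntegrable_of_Icc hs.2)
        fun u hu => hle u ⟨hs.1.trans hu.1, hu.2⟩)
      (exp_pos _).le (by positivity)
  calc _ ≤ ∫ s in 0..t, |exp (2 * (∫ u in s..t, a u) / ε) * (a' s / (2 * a s ^ 2))| :=
        abs_integral_le_integral_abs ht
    _ ≤ ∫ s in 0..t, c / (2 * m ^ 2) * exp (2 * m / ε * (s - t)) :=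
        integral_mono_on ht (intervalIntegrable_exp_integral_mul ht ha ha'
          fun s hs => (hle s hs).trans_lt (by linarith) |>.ne).abs
          (by apply Continuous.intervalIntegrable; fun_prop) hpt
    _ = c / (2 * m ^ 2) * ∫ s in 0..t, exp (2 * m / ε * (s - t)) := integral_const_mul _ _
    _ ≤ c / (2 * m ^ 2) * (2 * m / ε)⁻¹ :=
        mul_le_mul_of_nonneg_left (integral_exp_mul_sub_le_inv (by positivity)) (by positivity)
    _ = c * ε / (4 * m ^ 3) := by field_simp; ring

end

/-- Lemma 3.1 (i): `ζ(t) = 1/(2|ā(t)|) + O(ε)` uniformly on `[0,T]`, with a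
constant depending only on `ā₋` and `c₂`. -/
theorem stmt5 (aminus c₂ : ℝ) (hm : 0 < aminus) (hc₂ : 0 ≤ c₂) :
    ∃ C > 0, ∀ (T ε aplus : ℝ) (abar : ℝ → ℝ), 0 ≤ T → 0 < ε → aminus ≤ aplus →
      ContDiffOn ℝ 1 abar (Set.Icc 0 T) →
      (∀ t ∈ Set.Icc (0:ℝ) T, -aplus ≤ abar t ∧ abar t ≤ -aminus) →
      (∀ t ∈ Set.Icc (0:ℝ) T, |derivWithin abar (Set.Icc 0 T) t| ≤ c₂) →
      ∀ t ∈ Set.Icc (0:ℝ) T,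
        |zetaFn abar ε t - 1 / (2 * |abar t|)| ≤ C * ε := by
  refine ⟨c₂ / (4 * aminus ^ 3) + 1, by positivity, ?_⟩
  intro T ε aplus abar _ hε _ hC hbnd hder t ht
  obtain rfl | htpos := ht.1.eq_or_lt
  · simp only [zetaFn, integral_same, mul_zero, zero_div, exp_zero, mul_one, add_zero,
      sub_self, abs_zero]
    positivity
  have hsub : Icc 0 t ⊆ Icc 0 T := Icc_subset_Icc_right ht.2
  have ha := hC.continuousOn.mono hsub
  have ha' := (hC.continuousOn_derivWithin (uniqueDiffOn_Icc (htpos.trans_le ht.2))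
    le_rfl).mono hsub
  have hderiv (x) (hx : x ∈ Ioo 0 t) : HasDerivAt abar (derivWithin abar (Icc 0 T) x) x :=
    (hC.differentiableOn one_ne_zero x (hsub (Ioo_subset_Icc_self hx))).hasDerivWithinAt
      |>.hasDerivAt (Icc_mem_nhds hx.1 (hx.2.trans_le ht.2))
  rw [zetaFn_sub_eq_neg_integral hε.ne' htpos.le ha ha' hderiv
    fun s hs => (hbnd s (hsub hs)).2.trans_lt (neg_lt_zero.2 hm), abs_neg]
  calc _ ≤ c₂ * ε / (4 * aminus ^ 3) :=
        abs_integral_exp_integral_mul_le hm hε htpos.le ha ha'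
          (fun s hs => (hbnd s (hsub hs)).2) fun s hs => hder s (hsub hs)
    _ ≤ (c₂ / (4 * aminus ^ 3) + 1) * ε := by
        rw [mul_div_right_comm, add_mul]
        linarith
end

section
/- Let a : [t₀, T] → ℝ satisfy a₊ t ≤ a(t) ≤ a₋ t for t₀ ≤ t ≤ 0 (with 0 < a₋ ≤ a₊, t₀ < 0), and define ζ(t) = (1/(2|a(t₀)|)) e^{2α(t,t₀)/ε} + (1/ε) ∫_{t₀}^t e^{2α(t,s)/ε} ds with α(t,s) = ∫_s^t a(u) du. If ε ≤ 4 a(t₀)² and ε ≤ (t₀/2)², then for all t ∈ [t₀, −√ε]: ζ(t) ≤ (1/|t|)(1/(2a₋) + 1/(2a₊)). -/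
/-!
For `s ≤ t ≤ 0` the hypothesis `a u ≤ a₋ u` gives `α(t, s) ≤ a₋ (t² - s²) / 2 ≤ -a₋ |t| (t - s)`,
so both terms of `ζ(t)` are controlled by the single exponential `exp (-c (t - s))` with
`c = 2 a₋ |t| / ε`. Since `|a(t₀)| ≥ a₋ |t₀| ≥ a₋ |t|`, the boundary term is at most
`exp (-c (t - t₀)) / (ε c)`, while the integral term is at most `(1 - exp (-c (t - t₀))) / (ε c)`;
the two add up to `1 / (ε c) = 1 / (2 a₋ |t|)`.
-/

open Real MeasureTheory Set

lemma integral_le_mul_mul_sub_of_le_mul {a : ℝ → ℝ} {m s t : ℝ} (hm : 0 ≤ m) (hst : s ≤ t)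
    (ha : IntervalIntegrable a volume s t) (hle : ∀ u ∈ Icc s t, a u ≤ m * u) :
    ∫ u in s..t, a u ≤ m * t * (t - s) := by
  have hmono : ∫ u in s..t, a u ≤ ∫ u in s..t, m * u :=
    intervalIntegral.integral_mono_on hst ha ((continuous_const_mul m).intervalIntegrable _ _) hle
  have hlin : ∫ u in s..t, m * u = m * ((t ^ 2 - s ^ 2) / 2) := by
    rw [intervalIntegral.integral_const_mul, integral_id]
  -- `t² - s² = 2 t (t - s) - (t - s)²`
  nlinarith [mul_nonneg hm (sq_nonneg (t - s))]

lemma exp_integral_div_le_exp_mul_sub {a : ℝ → ℝ} {m ε s t : ℝ} (hm : 0 ≤ m) (hε : 0 < ε)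
    (hst : s ≤ t) (ha : IntervalIntegrable a volume s t)
    (hle : ∀ u ∈ Icc s t, a u ≤ m * u) :
    exp (2 * (∫ u in s..t, a u) / ε) ≤ exp (2 * m * -t / ε * (s - t)) := by
  have h := integral_le_mul_mul_sub_of_le_mul hm hst ha hle
  rw [exp_le_exp, div_mul_eq_mul_div]
  exact div_le_div_of_nonneg_right (by linarith) hε.le

lemma intervalIntegrable_exp_mul_integral_div {a : ℝ → ℝ} {s₀ t : ℝ} (k ε : ℝ)
    (ha : IntervalIntegrable a volume s₀ t) :
    IntervalIntegrable (fun s => exp (k * (∫ u in s..t, a u) / ε)) volume s₀ t :=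
  have hprimitive : ContinuousOn (fun s => ∫ u in s..t, a u) (uIcc s₀ t) :=
    intervalIntegral.continuousOn_primitive_interval_left ((intervalIntegrable_iff' ..).1 ha)
  ((continuousOn_const.mul hprimitive).div_const ε).rexp.intervalIntegrable

lemma integral_exp_mul_sub (c s₀ t : ℝ) (hc : c ≠ 0) :
    ∫ s in s₀..t, exp (c * (s - t)) = (1 - exp (c * (s₀ - t))) / c := by
  simp_rw [mul_sub]
  rw [intervalIntegral.integral_comp_mul_sub (f := exp) hc, integral_exp, sub_self, exp_zero,
    smul_eq_mul, inv_mul_eq_div]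

lemma mul_add_mul_integral_le_of_le_exp {g : ℝ → ℝ} {A B c s₀ t : ℝ} (hc : 0 < c) (hA : 0 ≤ A)
    (hAB : A ≤ B / c) (hB : 0 ≤ B) (hs₀t : s₀ ≤ t) (hg : IntervalIntegrable g volume s₀ t)
    (hle : ∀ s ∈ Icc s₀ t, g s ≤ exp (c * (s - t))) :
    A * g s₀ + B * ∫ s in s₀..t, g s ≤ B / c := by
  have hg₀ := hle s₀ ⟨le_rfl, hs₀t⟩
  have hboundary : A * g s₀ ≤ B / c * exp (c * (s₀ - t)) :=
    (mul_le_mul_of_nonneg_left hg₀ hA).trans (mul_le_mul_of_nonneg_right hAB (exp_pos _).le)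
  have hintegral : ∫ s in s₀..t, g s ≤ (1 - exp (c * (s₀ - t))) / c := by
    rw [← integral_exp_mul_sub c s₀ t hc.ne']
    exact intervalIntegral.integral_mono_on hs₀t hg
      ((by fun_prop : Continuous fun s => exp (c * (s - t))).intervalIntegrable _ _) hle
  calc A * g s₀ + B * ∫ s in s₀..t, g s
      ≤ B / c * exp (c * (s₀ - t)) + B * ((1 - exp (c * (s₀ - t))) / c) :=
        add_le_add hboundary (mul_le_mul_of_nonneg_left hintegral hB)
    _ = B / c := by ring

theorem stmt7_general (t₀ T aplus aminus ε : ℝ) (a : ℝ → ℝ) (hT : 0 < T)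
    (hm : 0 < aminus) (hpm : aminus ≤ aplus)
    (hε : 0 < ε)
    (hint : IntervalIntegrable a volume t₀ T)
    (hneg : ∀ t ∈ Set.Icc t₀ 0, aplus * t ≤ a t ∧ a t ≤ aminus * t) :
    ∀ t : ℝ, t₀ ≤ t → t ≤ -Real.sqrt ε →
      1 / (2 * |a t₀|) * Real.exp (2 * (∫ u in t₀..t, a u) / ε)
          + (1 / ε) * ∫ s in t₀..t, Real.exp (2 * (∫ u in s..t, a u) / ε)
        ≤ (1 / |t|) * (1 / (2 * aminus) + 1 / (2 * aplus)) := by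
  intro t ht₀t htε
  have ht : t < 0 := htε.trans_lt (neg_neg_of_pos (sqrt_pos.2 hε))
  have ht' : 0 < -t := neg_pos.2 ht
  have hint_t : IntervalIntegrable a volume t₀ t := hint.mono_set <|
    uIcc_subset_uIcc_left ⟨inf_le_left.trans ht₀t, (ht.trans hT).le.trans le_sup_right⟩
  have hint_s : ∀ s ∈ Icc t₀ t, IntervalIntegrable a volume s t := fun s hs =>
    hint_t.mono_set (uIcc_subset_uIcc_right (Icc_subset_uIcc hs))
  have hle : ∀ s ∈ Icc t₀ t, ∀ u ∈ Icc s t, a u ≤ aminus * u := fun s hs u hu =>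
    (hneg u ⟨hs.1.trans hu.1, hu.2.trans ht.le⟩).2
  have hat₀ : aminus * -t ≤ |a t₀| := by
    have := (hneg t₀ ⟨le_rfl, ht₀t.trans ht.le⟩).2
    nlinarith [neg_le_abs (a t₀)]
  have hc : 0 < 2 * aminus * -t / ε := by positivity
  have hBc : 1 / ε / (2 * aminus * -t / ε) = 1 / (2 * aminus * -t) := by field_simp
  have hAB : 1 / (2 * |a t₀|) ≤ 1 / ε / (2 * aminus * -t / ε) :=
    hBc ▸ one_div_le_one_div_of_le (by positivity) (by linarith)
  calc _ ≤ 1 / ε / (2 * aminus * -t / ε) :=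
        mul_add_mul_integral_le_of_le_exp hc (by positivity) hAB (by positivity) ht₀t
          (intervalIntegrable_exp_mul_integral_div 2 ε hint_t)
          fun s hs => exp_integral_div_le_exp_mul_sub hm.le hε hs.2 (hint_s s hs) (hle s hs)
    _ = 1 / |t| * (1 / (2 * aminus)) := by rw [hBc, abs_of_neg ht]; field_simp
    _ ≤ 1 / |t| * (1 / (2 * aminus) + 1 / (2 * aplus)) := by
        have := hm.trans_le hpm
        gcongr
        exact le_add_of_nonneg_right (by positivity)

/-- Lemma 4.2, upper bound for `t₀ ≤ t ≤ -√ε`: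
`ζ(t) ≤ (1/|t|)(1/(2a₋) + 1/(2a₊))`. -/
theorem stmt7 (t₀ T aplus aminus ε : ℝ) (a : ℝ → ℝ) (ht₀ : t₀ < 0) (hT : 0 < T)
    (hm : 0 < aminus) (hpm : aminus ≤ aplus)
    (hε : 0 < ε) (hε1 : ε ≤ 4 * (a t₀) ^ 2) (hε2 : ε ≤ (t₀ / 2) ^ 2)
    (hint : IntervalIntegrable a volume t₀ T)
    (hneg : ∀ t ∈ Set.Icc t₀ 0, aplus * t ≤ a t ∧ a t ≤ aminus * t) :
    ∀ t : ℝ, t₀ ≤ t → t ≤ -Real.sqrt ε →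
      1 / (2 * |a t₀|) * Real.exp (2 * (∫ u in t₀..t, a u) / ε)
          + (1 / ε) * ∫ s in t₀..t, Real.exp (2 * (∫ u in s..t, a u) / ε)
        ≤ (1 / |t|) * (1 / (2 * aminus) + 1 / (2 * aplus)) :=
  stmt7_general t₀ T aplus aminus ε a hT hm hpm hε hint hneg
end

section
/- Let a : [t₀, T] → ℝ be continuously differentiable with a'(t) > 0 for all t, and a(t₀) < 0. Then the solution ζ of the initial value problem εζ' = 2a(t)ζ + 1, ζ(t₀) = 1/(2|a(t₀)|), is nondecreasing on [t₀, T] (as long as a remains negative or becomes positive). -/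
/-!
Write `g = 2aζ + 1`, so that `εζ' = g`. A function that is strictly increasing through each of
its zeros cannot leave `[0, ∞)`. This applies first to `ζ` (where `ζ = 0` we have `εζ' = 1`),
and then to `g`: where `g = 0` we have `2aζ = -1`, so `ζ > 0` and `g' = 2a'ζ + 2ag/ε = 2a'ζ > 0`.
Hence `ζ' = g/ε ≥ 0`.
-/

open Set

theorem two_mul_mul_one_div_two_mul_abs_add_one_nonneg (x : ℝ) :
    0 ≤ 2 * x * (1 / (2 * |x|)) + 1 := by
  rcases eq_or_ne x 0 with rfl | hx
  · simp
  · rw [mul_one_div, mul_div_mul_left _ _ two_ne_zero, ← neg_le_iff_add_nonneg', neg_le,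
      le_div_iff₀ (abs_pos.2 hx)]
    linarith [neg_abs_le x]

theorem HasDerivWithinAt.Ici_of_Icc {f : ℝ → ℝ} {f' a b x : ℝ}
    (hf : HasDerivWithinAt f f' (Icc a b) x) (hx : x ∈ Ico a b) :
    HasDerivWithinAt f f' (Ici x) x :=
  hf.mono_of_mem_nhdsWithin (Icc_mem_nhdsGE_of_mem hx)

theorem nonneg_of_hasDerivWithinAt_pos_of_eq_zero {f f' : ℝ → ℝ} {a b : ℝ}
    (hf : ∀ x ∈ Icc a b, HasDerivWithinAt f (f' x) (Icc a b) x) (ha : 0 ≤ f a)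
    (hpos : ∀ x ∈ Ico a b, f x = 0 → 0 < f' x) {x : ℝ} (hx : x ∈ Icc a b) : 0 ≤ f x :=
  image_le_of_deriv_right_lt_deriv_boundary' continuousOn_const
    (fun _ _ => hasDerivWithinAt_const _ _ 0) ha
    (fun y hy => (hf y hy).continuousWithinAt)
    (fun y hy => (hf y (Ico_subset_Icc_self hy)).Ici_of_Icc hy)
    (fun y hy hy0 => hpos y hy hy0.symm) hx

theorem monotoneOn_Icc_of_hasDerivWithinAt_nonneg {f f' : ℝ → ℝ} {a b : ℝ}
    (hf : ∀ x ∈ Icc a b, HasDerivWithinAt f (f' x) (Icc a b) x)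
    (hf' : ∀ x ∈ Icc a b, 0 ≤ f' x) : MonotoneOn f (Icc a b) :=
  monotoneOn_of_hasDerivWithinAt_nonneg (convex_Icc a b)
    (fun x hx => (hf x hx).continuousWithinAt)
    (fun x hx => (hf x (interior_subset hx)).mono interior_subset)
    (fun x hx => hf' x (interior_subset hx))

section LinearODE

variable {t₀ T ε : ℝ} {a a' ζ : ℝ → ℝ}

theorem nonneg_of_hasDerivWithinAt_two_mul_add_one (hε : 0 < ε) (hζ₀ : 0 ≤ ζ t₀)
    (hζ : ∀ t ∈ Icc t₀ T, HasDerivWithinAt ζ ((2 * a t * ζ t + 1) / ε) (Icc t₀ T) t)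
    {t : ℝ} (ht : t ∈ Icc t₀ T) : 0 ≤ ζ t :=
  nonneg_of_hasDerivWithinAt_pos_of_eq_zero hζ hζ₀
    (fun s _ hs => by rw [hs, mul_zero, zero_add]; positivity) ht

theorem two_mul_mul_add_one_nonneg_of_hasDerivWithinAt
    (ha : ∀ t ∈ Icc t₀ T, HasDerivWithinAt a (a' t) (Icc t₀ T) t)
    (ha' : ∀ t ∈ Icc t₀ T, 0 < a' t) (hζ_nonneg : ∀ t ∈ Icc t₀ T, 0 ≤ ζ t)
    (hζ₀ : 0 ≤ 2 * a t₀ * ζ t₀ + 1)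
    (hζ : ∀ t ∈ Icc t₀ T, HasDerivWithinAt ζ ((2 * a t * ζ t + 1) / ε) (Icc t₀ T) t)
    {t : ℝ} (ht : t ∈ Icc t₀ T) : 0 ≤ 2 * a t * ζ t + 1 := by
  refine nonneg_of_hasDerivWithinAt_pos_of_eq_zero (f := fun t => 2 * a t * ζ t + 1)
    (fun s hs => (((ha s hs).const_mul 2).mul (hζ s hs)).add_const 1) hζ₀ (fun s hs hs0 => ?_) ht
  have hs := Ico_subset_Icc_self hs
  have hζs : 0 < ζ s := (hζ_nonneg s hs).lt_of_ne fun h => by simp [← h] at hs0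
  rw [hs0, zero_div, mul_zero, add_zero]
  have := ha' s hs
  positivity

end LinearODE

theorem stmt8_general (t₀ T ε : ℝ) (hε : 0 < ε)
    (a ζ : ℝ → ℝ)
    (haC : ContDiffOn ℝ 1 a (Set.Icc t₀ T))
    (ha' : ∀ t ∈ Set.Icc t₀ T, 0 < derivWithin a (Set.Icc t₀ T) t)
    (hζ0 : ζ t₀ = 1 / (2 * |a t₀|))
    (hζ : ∀ t ∈ Set.Icc t₀ T,
      HasDerivWithinAt ζ ((2 * a t * ζ t + 1) / ε) (Set.Icc t₀ T) t) :
    MonotoneOn ζ (Set.Icc t₀ T) := by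
  have ha : ∀ t ∈ Icc t₀ T, HasDerivWithinAt a (derivWithin a (Icc t₀ T) t) (Icc t₀ T) t :=
    fun t ht => (haC.differentiableOn one_ne_zero t ht).hasDerivWithinAt
  have hζ_nonneg : ∀ t ∈ Icc t₀ T, 0 ≤ ζ t := fun t ht =>
    nonneg_of_hasDerivWithinAt_two_mul_add_one hε (by rw [hζ0]; positivity) hζ ht
  have hg₀ : 0 ≤ 2 * a t₀ * ζ t₀ + 1 :=
    hζ0 ▸ two_mul_mul_one_div_two_mul_abs_add_one_nonneg (a t₀)
  refine monotoneOn_Icc_of_hasDerivWithinAt_nonneg hζ fun t ht => div_nonneg ?_ hε.le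
  exact two_mul_mul_add_one_nonneg_of_hasDerivWithinAt ha ha' hζ_nonneg hg₀ hζ ht

/-- Monotonicity of the solution of `εζ' = 2a(t)ζ + 1`, `ζ(t₀) = 1/(2|a(t₀)|)`,
when `a` is strictly increasing with `a(t₀) < 0` (Lemma 4.2, last part). -/
theorem stmt8 (t₀ T ε : ℝ) (ht : t₀ ≤ T) (hε : 0 < ε)
    (a ζ : ℝ → ℝ)
    (haC : ContDiffOn ℝ 1 a (Set.Icc t₀ T))
    (ha' : ∀ t ∈ Set.Icc t₀ T, 0 < derivWithin a (Set.Icc t₀ T) t)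
    (ha0 : a t₀ < 0)
    (hζ0 : ζ t₀ = 1 / (2 * |a t₀|))
    (hζ : ∀ t ∈ Set.Icc t₀ T,
      HasDerivWithinAt ζ ((2 * a t * ζ t + 1) / ε) (Set.Icc t₀ T) t) :
    MonotoneOn ζ (Set.Icc t₀ T) :=
  stmt8_general t₀ T ε hε a ζ haC ha' hζ0 hζ
end

section
/- With the notation of the previous context (a ≥ 0 integrable on [s,t], α(u,s) = ∫_s^u a, g(u,s) = e^{−κα(u,s)/ε}/√(1−e^{−2κα(u,s)/ε}), and φ = e^{−κα(t,s)/ε}), one has the exact identity ∫_s^t (a(u)/ε) e^{−κα(u,s)/ε} g(t,u) g(u,s) du = (π/(2κ)) φ. -/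
/-!
Write `T = α(t,s)`. The primitive `u ↦ α(u,s)` pushes the measure `a(u) du` on `(s,t]` forward to
Lebesgue measure on `(0,T]`, so the integral equals `∫₀ᵀ k` with
`k(x) = e^{-κx/ε} g(T-x) g(x) / ε`, where `g` is viewed as a function of `α`. In the variable
`w = e^{-2κx/ε}` one has `k = -(φ/(2κ)) w' / √((w - φ²)(1 - w))`, so
`-(φ/(2κ)) arcsin ((2w - (1 + φ²)) / (1 - φ²))` is a primitive of `k`; as `x` runs from `0` to `T`
its argument runs from `1` to `-1`. Since `k ≥ 0`, it is integrable despite its singularities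
at both ends.
-/

open Real MeasureTheory Set

theorem ContinuousOn.exists_preimage_Iic_inter_Ioc {f : ℝ → ℝ} {s t c : ℝ} (hst : s ≤ t)
    (hf : ContinuousOn f (Icc s t)) (hmono : MonotoneOn f (Icc s t)) (hc : f s ≤ c) :
    ∃ u ∈ Icc s t, f ⁻¹' Iic c ∩ Ioc s t = Ioc s u ∧ f u = min c (f t) := by
  set S := Icc s t ∩ f ⁻¹' Iic c
  have hsS : s ∈ S := ⟨left_mem_Icc.2 hst, hc⟩
  have hbdd : BddAbove S := ⟨t, fun v hv => hv.1.2⟩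
  have huS : sSup S ∈ S :=
    (hf.preimage_isClosed_of_isClosed isClosed_Icc isClosed_Iic).csSup_mem ⟨s, hsS⟩ hbdd
  set u := sSup S
  have hu : u ∈ Icc s t := huS.1
  refine ⟨u, hu, ?_, ?_⟩
  · ext v
    constructor
    · rintro ⟨hvc, hv⟩
      exact ⟨hv.1, le_csSup hbdd ⟨Ioc_subset_Icc_self hv, hvc⟩⟩
    · rintro ⟨hsv, hvu⟩
      have hv : v ∈ Icc s t := ⟨hsv.le, hvu.trans hu.2⟩
      exact ⟨(hmono hv hu hvu).trans huS.2, hsv, hv.2⟩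
  · rcases le_total (f t) c with htc | hct
    · rw [min_eq_right htc, le_antisymm hu.2 (le_csSup hbdd ⟨right_mem_Icc.2 hst, htc⟩)]
    · obtain ⟨v, hv, hfv⟩ := intermediate_value_Icc hu.2 (hf.mono (Icc_subset_Icc_left hu.1))
        ⟨huS.2, hct⟩
      have hvu : v ≤ u := le_csSup hbdd ⟨⟨hu.1.trans hv.1, hv.2⟩, hfv.le⟩
      rw [min_eq_left hct, ← hfv, le_antisymm hvu hv.1]

section Primitive

variable {a : ℝ → ℝ} {s t : ℝ}

theorem monotoneOn_primitive (ha : IntervalIntegrable a volume s t)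
    (ha0 : ∀ u ∈ Icc s t, 0 ≤ a u) : MonotoneOn (fun u => ∫ r in s..u, a r) (Icc s t) := by
  intro u hu v hv huv
  have hsv : uIcc s v ⊆ uIcc s t := uIcc_subset_uIcc_left (Icc_subset_uIcc hv)
  refine intervalIntegral.integral_mono_interval le_rfl hu.1 huv ?_ (ha.mono_set hsv)
  filter_upwards [ae_restrict_mem measurableSet_Ioc] with r hr
  exact ha0 r ⟨hr.1.le, hr.2.trans hv.2⟩

theorem aemeasurable_primitive (ha : IntervalIntegrable a volume s t) (f : ℝ → ENNReal) :
    AEMeasurable (fun u => ∫ r in s..u, a r) ((volume.restrict (Ioc s t)).withDensity f) := by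
  have hA := intervalIntegral.continuousOn_primitive_interval' ha (left_mem_uIcc (b := t))
  exact ((hA.aemeasurable measurableSet_uIcc).mono_measure
    (Measure.restrict_mono (Ioc_subset_Icc_self.trans Icc_subset_uIcc) le_rfl)).mono_ac
      (withDensity_absolutelyContinuous _ _)

theorem map_primitive_withDensity (hst : s ≤ t) (ha : IntervalIntegrable a volume s t)
    (ha0 : ∀ u ∈ Icc s t, 0 ≤ a u) :
    ((volume.restrict (Ioc s t)).withDensity fun u => ENNReal.ofReal (a u)).map
        (fun u => ∫ r in s..u, a r) = volume.restrict (Ioc 0 (∫ r in s..t, a r)) := by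
  have hA : ContinuousOn (fun u => ∫ r in s..u, a r) (Icc s t) := by
    simpa [uIcc_of_le hst] using
      intervalIntegral.continuousOn_primitive_interval' ha (left_mem_uIcc (b := t))
  have hmono := monotoneOn_primitive ha ha0
  have : IsFiniteMeasure ((volume.restrict (Ioc s t)).withDensity fun u => ENNReal.ofReal (a u)) :=
    isFiniteMeasure_withDensity_ofReal ha.1.2
  refine Measure.ext_of_Iic _ _ fun c => ?_
  rw [Measure.map_apply_of_aemeasurable (aemeasurable_primitive ha _) measurableSet_Iic,
    withDensity_apply', Measure.restrict_restrict' measurableSet_Ioc,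
    Measure.restrict_apply measurableSet_Iic, inter_comm (Iic c), Ioc_inter_Iic, Real.volume_Ioc,
    sub_zero]
  rcases lt_or_ge c 0 with hc | hc
  · have hempty : (fun u => ∫ r in s..u, a r) ⁻¹' Iic c ∩ Ioc s t = ∅ := by
      refine eq_empty_of_forall_notMem fun u ⟨hu, hu'⟩ => ?_
      have := hmono (left_mem_Icc.2 hst) (Ioc_subset_Icc_self hu') hu'.1.le
      simp only [intervalIntegral.integral_same, mem_preimage, mem_Iic] at this hu
      linarith
    rw [hempty, Measure.restrict_empty, lintegral_zero_measure, ENNReal.ofReal_of_nonpos]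
    exact (min_le_right _ _).trans hc.le
  · obtain ⟨u, hu, hset, hAu⟩ := hA.exists_preimage_Iic_inter_Ioc hst hmono
      (by simpa only [intervalIntegral.integral_same] using hc)
    rw [hset, ← ofReal_integral_eq_lintegral_ofReal, ← intervalIntegral.integral_of_le hu.1, hAu,
      min_comm]
    · exact ha.1.mono_set (Ioc_subset_Ioc_right hu.2)
    · filter_upwards [ae_restrict_mem measurableSet_Ioc] with r hr
      exact ha0 r ⟨hr.1.le, hr.2.trans hu.2⟩

theorem integral_mul_comp_primitive (hst : s ≤ t) (ha : IntervalIntegrable a volume s t)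
    (ha0 : ∀ u ∈ Icc s t, 0 ≤ a u) {h : ℝ → ℝ}
    (hh : AEStronglyMeasurable h (volume.restrict (Ioc 0 (∫ r in s..t, a r)))) :
    ∫ u in s..t, a u * h (∫ r in s..u, a r) = ∫ x in 0..(∫ r in s..t, a r), h x := by
  have hα : 0 ≤ ∫ r in s..t, a r := intervalIntegral.integral_nonneg hst ha0
  rw [← map_primitive_withDensity hst ha ha0] at hh
  rw [intervalIntegral.integral_of_le hα, ← map_primitive_withDensity hst ha ha0,
    integral_map (aemeasurable_primitive ha _) hh,
    integral_withDensity_eq_integral_toReal_smul₀ ha.1.aemeasurable.ennreal_ofReal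
      (ae_of_all _ fun _ => ENNReal.ofReal_lt_top), intervalIntegral.integral_of_le hst]
  refine integral_congr_ae ?_
  filter_upwards [ae_restrict_mem measurableSet_Ioc] with u hu
  rw [ENNReal.toReal_ofReal (ha0 u (Ioc_subset_Icc_self hu)), smul_eq_mul]

end Primitive

theorem hasDerivAt_arcsin_affine {m M w : ℝ} (hw : w ∈ Ioo m M) :
    HasDerivAt (fun w => arcsin ((2 * w - (m + M)) / (M - m)))
      (1 / √((w - m) * (M - w))) w := by
  obtain ⟨hmw, hwM⟩ := hw
  have hMm : 0 < M - m := by linarith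
  set z := (2 * w - (m + M)) / (M - m)
  have hz : 1 - z ^ 2 = (2 / (M - m)) ^ 2 * ((w - m) * (M - w)) := by
    simp only [z]; field_simp; ring
  have hz1 : -1 < z := by simp only [z]; rw [lt_div_iff₀ hMm]; linarith
  have hz2 : z < 1 := by simp only [z]; rw [div_lt_one hMm]; linarith
  have hlin : HasDerivAt (fun w => (2 * w - (m + M)) / (M - m)) (2 / (M - m)) w := by
    simpa using (((hasDerivAt_id w).const_mul 2).sub_const (m + M)).div_const (M - m)
  refine ((hasDerivAt_arcsin hz1.ne' hz2.ne).comp w hlin).congr_deriv ?_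
  rw [hz, sqrt_mul (by positivity), sqrt_sq (by positivity)]
  have : 0 < √((w - m) * (M - w)) := sqrt_pos.2 (by nlinarith)
  field_simp

theorem exp_two_mul_neg_div (κ ε y : ℝ) : exp (-2 * κ * y / ε) = exp (-κ * y / ε) ^ 2 := by
  rw [← exp_nat_mul]; ring_nf

theorem exp_neg_div_lt_one {κ ε y : ℝ} (hκ : 0 < κ) (hε : 0 < ε) (hy : 0 < y) :
    exp (-κ * y / ε) < 1 := by
  rw [exp_lt_one_iff, neg_mul, neg_div, neg_lt_zero]; positivity

theorem exp_neg_div_mem_Ioo {κ ε T x : ℝ} (hκ : 0 < κ) (hε : 0 < ε) (hx : x ∈ Ioo 0 T) :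
    exp (-κ * x / ε) ∈ Ioo (exp (-κ * T / ε)) 1 := by
  refine ⟨?_, exp_neg_div_lt_one hκ hε hx.1⟩
  rw [exp_lt_exp, div_lt_div_iff_of_pos_right hε]
  nlinarith [hx.2]

/-- The paper's `g(v,w)`, as a function of `y = α(v,w)`. -/
noncomputable def gFactor (κ ε y : ℝ) : ℝ := exp (-κ * y / ε) / √(1 - exp (-2 * κ * y / ε))

noncomputable def gKernel (κ ε T x : ℝ) : ℝ :=
  exp (-κ * x / ε) * gFactor κ ε (T - x) * gFactor κ ε x / ε

noncomputable def gKernelPrimitive (κ ε T y : ℝ) : ℝ :=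
  -(exp (-κ * T / ε) / (2 * κ)) * arcsin ((2 * exp (-2 * κ * y / ε) -
    (exp (-κ * T / ε) ^ 2 + 1)) / (1 - exp (-κ * T / ε) ^ 2))

theorem gFactor_eq (κ ε y : ℝ) :
    gFactor κ ε y = exp (-κ * y / ε) / √(1 - exp (-κ * y / ε) ^ 2) := by
  rw [gFactor, exp_two_mul_neg_div]

theorem gKernel_eq_of_mem_Ioo {κ ε T x : ℝ} (hκ : 0 < κ) (hε : 0 < ε) (hx : x ∈ Ioo 0 T) :
    gKernel κ ε T x = -(exp (-κ * T / ε) / (2 * κ)) *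
      (1 / √((exp (-κ * x / ε) ^ 2 - exp (-κ * T / ε) ^ 2) * (1 - exp (-κ * x / ε) ^ 2)) *
        (exp (-κ * x / ε) ^ 2 * (-2 * κ / ε))) := by
  have hq : exp (-κ * (T - x) / ε) = exp (-κ * T / ε) / exp (-κ * x / ε) := by
    rw [← exp_sub]; ring_nf
  obtain ⟨hφp, hp1⟩ := exp_neg_div_mem_Ioo hκ hε hx
  have hφ : 0 < exp (-κ * T / ε) := exp_pos _
  rw [gKernel, gFactor_eq, gFactor_eq, hq]
  generalize exp (-κ * T / ε) = φ, exp (-κ * x / ε) = p at *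
  have hp : 0 < p := hφ.trans hφp
  have h1 : 1 - (φ / p) ^ 2 = (p ^ 2 - φ ^ 2) / p ^ 2 := by field_simp
  have h2 : 0 < p ^ 2 - φ ^ 2 := by nlinarith
  have h3 : 0 < 1 - p ^ 2 := by nlinarith
  rw [h1, sqrt_div' _ (sq_nonneg p), sqrt_sq hp.le, sqrt_mul h2.le]
  have := sqrt_pos.2 h2
  have := sqrt_pos.2 h3
  field_simp

theorem hasDerivAt_gKernelPrimitive {κ ε T x : ℝ} (hκ : 0 < κ) (hε : 0 < ε) (hx : x ∈ Ioo 0 T) :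
    HasDerivAt (gKernelPrimitive κ ε T) (gKernel κ ε T x) x := by
  have hw :
      HasDerivAt (fun y => exp (-2 * κ * y / ε)) (exp (-κ * x / ε) ^ 2 * (-2 * κ / ε)) x := by
    rw [← exp_two_mul_neg_div]
    exact ((hasDerivAt_id' x).const_mul (-2 * κ) |>.div_const ε |>.exp).congr_deriv (by ring_nf)
  have hmem : exp (-2 * κ * x / ε) ∈ Ioo (exp (-κ * T / ε) ^ 2) 1 := by
    obtain ⟨hφp, hp1⟩ := exp_neg_div_mem_Ioo hκ hε hx
    rw [exp_two_mul_neg_div]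
    constructor <;> nlinarith [exp_pos (-κ * T / ε)]
  rw [gKernel_eq_of_mem_Ioo hκ hε hx]
  have := ((hasDerivAt_arcsin_affine hmem).comp x hw).const_mul (-(exp (-κ * T / ε) / (2 * κ)))
  rwa [exp_two_mul_neg_div] at this

theorem gKernel_nonneg (κ ε T x : ℝ) (hε : 0 < ε) : 0 ≤ gKernel κ ε T x := by
  unfold gKernel gFactor; positivity

theorem integral_gKernel {κ ε T : ℝ} (hκ : 0 < κ) (hε : 0 < ε) (hT : 0 < T) :
    ∫ x in 0..T, gKernel κ ε T x = π / (2 * κ) * exp (-κ * T / ε) := by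
  have hcont : ContinuousOn (gKernelPrimitive κ ε T) (Icc 0 T) := by
    unfold gKernelPrimitive; fun_prop
  have hderiv : ∀ x ∈ Ioo 0 T, HasDerivAt (gKernelPrimitive κ ε T) (gKernel κ ε T x) x :=
    fun x hx => hasDerivAt_gKernelPrimitive hκ hε hx
  have hint : IntervalIntegrable (gKernel κ ε T) volume 0 T :=
    (intervalIntegrable_iff_integrableOn_Ioc_of_le hT.le).2
      (intervalIntegral.integrableOn_deriv_of_nonneg hcont hderiv fun x _ =>
        gKernel_nonneg κ ε T x hε)
  have hφ1 : exp (-κ * T / ε) ^ 2 < 1 := by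
    have := exp_neg_div_lt_one hκ hε hT
    nlinarith [exp_pos (-κ * T / ε)]
  rw [intervalIntegral.integral_eq_sub_of_hasDerivAt_of_le hT.le hcont hderiv hint,
    gKernelPrimitive, gKernelPrimitive, exp_two_mul_neg_div, exp_two_mul_neg_div, mul_zero,
    zero_div, exp_zero]
  generalize exp (-κ * T / ε) = φ at hφ1 ⊢
  have hne : 1 - φ ^ 2 ≠ 0 := (sub_pos.2 hφ1).ne'
  rw [show (2 * φ ^ 2 - (φ ^ 2 + 1)) / (1 - φ ^ 2) = -1 by field_simp; ring,
    show (2 * 1 ^ 2 - (φ ^ 2 + 1)) / (1 - φ ^ 2) = 1 by field_simp; ring,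
    arcsin_neg_one, arcsin_one]
  field_simp
  ring

/-- Identity (5.47):
`∫_s^t (a(u)/ε) e^{-κα(u,s)/ε} g(t,u) g(u,s) du = (π/(2κ)) φ`,
with `g(v,w) = e^{-κα(v,w)/ε}(1-e^{-2κα(v,w)/ε})^{-1/2}` and `φ = e^{-κα(t,s)/ε}`. -/
theorem stmt12 (s t κ ε : ℝ) (hst : s ≤ t) (hκ : 0 < κ) (hε : 0 < ε)
    (a : ℝ → ℝ) (hanneg : ∀ u ∈ Set.Icc s t, 0 ≤ a u)
    (hint : IntervalIntegrable a volume s t)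
    (hα : 0 < ∫ r in s..t, a r) :
    (∫ u in s..t, (a u / ε) * Real.exp (-κ * (∫ r in s..u, a r) / ε) *
        (Real.exp (-κ * (∫ r in u..t, a r) / ε)
          / Real.sqrt (1 - Real.exp (-2 * κ * (∫ r in u..t, a r) / ε))) *
        (Real.exp (-κ * (∫ r in s..u, a r) / ε)
          / Real.sqrt (1 - Real.exp (-2 * κ * (∫ r in s..u, a r) / ε))))
      = Real.pi / (2 * κ) * Real.exp (-κ * (∫ r in s..t, a r) / ε) := by
  have hintegrand : ∀ u ∈ uIcc s t,
      (a u / ε) * exp (-κ * (∫ r in s..u, a r) / ε) *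
        (exp (-κ * (∫ r in u..t, a r) / ε) / √(1 - exp (-2 * κ * (∫ r in u..t, a r) / ε))) *
        (exp (-κ * (∫ r in s..u, a r) / ε) / √(1 - exp (-2 * κ * (∫ r in s..u, a r) / ε)))
      = a u * gKernel κ ε (∫ r in s..t, a r) (∫ r in s..u, a r) := by
    intro u hu
    have hsplit : ∫ r in u..t, a r = (∫ r in s..t, a r) - ∫ r in s..u, a r :=
      (intervalIntegral.integral_interval_sub_left hint
        (hint.mono_set (uIcc_subset_uIcc_left hu))).symm
    rw [hsplit, gKernel, gFactor, gFactor]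
    ring
  have hmeas : Measurable (gKernel κ ε (∫ r in s..t, a r)) := by
    unfold gKernel gFactor
    fun_prop
  rw [intervalIntegral.integral_congr hintegrand,
    integral_mul_comp_primitive hst hint hanneg hmeas.aestronglyMeasurable,
    integral_gKernel hκ hε hα]
end

section
/- Let a₀ > 0, ε > 0 and τ ≥ √ε, and set ξ = a₀τ²/(4ε) ≥ a₀/4. Then for all t ≥ τ: ∫_τ^t s^{−1/2} e^{−a₀(t²−s²)/(4ε)} ds ≤ (8/a₀) ε t^{−3/2}. -/
/-!
With `c = a₀ / (4ε)`, lower the left endpoint to `m = min τ (t/2)` (the integrand is nonnegative)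
and split at `t/2`. On `[t/2, t]` we have `1/√s ≤ √2/√t` and `t² - s² ≥ t (t - s)`, so the
exponential integrates explicitly; on `[m, t/2]` we have `t² - s² ≥ 3t²/4`, and `1/√s` integrates
to at most `√2 √t`. With `x = c t²` the two pieces add up to
`√2 (x e^{-3x/4} + 1 - e^{-x/2}) / (c t^{3/2})`, and since `x ≤ e^{x/2}` the bracket is at most
`y + 1 - y² ≤ 5/4` for `y = e^{-x/4}`; finally `√2 · 5/4 ≤ 2`.
-/

open Real MeasureTheory

lemma intervalIntegrable_one_div_sqrt {a b : ℝ} (ha : 0 < a) (hb : 0 < b) :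
    IntervalIntegrable (fun s => 1 / √s) volume a b := by
  refine ContinuousOn.intervalIntegrable fun x hx => ?_
  have hx0 : 0 < x := (lt_min ha hb).trans_le hx.1
  exact (continuousAt_const.div continuous_sqrt.continuousAt (sqrt_pos.2 hx0).ne').continuousWithinAt

lemma integral_one_div_sqrt {a b : ℝ} (ha : 0 < a) (hb : 0 < b) :
    ∫ s in a..b, 1 / √s = 2 * √b - 2 * √a := by
  refine intervalIntegral.integral_eq_sub_of_hasDerivAt (f := fun s => 2 * √s) (fun x hx => ?_)
    (intervalIntegrable_one_div_sqrt ha hb)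
  have hx0 : 0 < x := (lt_min ha hb).trans_le hx.1
  refine ((hasDerivAt_sqrt hx0.ne').const_mul 2).congr_deriv ?_
  field_simp

lemma integral_exp_mul_sub_s15 {k : ℝ} (hk : k ≠ 0) (a b : ℝ) :
    ∫ s in a..b, exp (k * s - k * b) = (1 - exp (k * a - k * b)) / k := by
  simp_rw [sub_eq_add_neg]
  rw [intervalIntegral.integral_comp_mul_add (fun x => exp x) hk, integral_exp, add_neg_cancel,
    exp_zero, smul_eq_mul, inv_mul_eq_div, sub_eq_add_neg]

lemma intervalIntegrable_one_div_sqrt_mul_exp {a b : ℝ} (ha : 0 < a) (hb : 0 < b) (c t : ℝ) :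
    IntervalIntegrable (fun s => 1 / √s * exp (-c * (t ^ 2 - s ^ 2))) volume a b :=
  (intervalIntegrable_one_div_sqrt ha hb).mul_continuousOn (by fun_prop)

lemma mul_exp_neg_add_one_sub_exp_neg_le {x : ℝ} (hx : 0 ≤ x) :
    x * exp (-(3 / 4 * x)) + (1 - exp (-(x / 2))) ≤ 5 / 4 := by
  set y := exp (-(x / 4)) with hy
  have hx_le_exp : x ≤ exp (x / 2) := by
    have hsq : exp (x / 2) = exp (x / 4) ^ 2 := by rw [← exp_nat_mul]; ring_nf
    nlinarith [add_one_le_exp (x / 4), sq_nonneg (x / 4 - 1)]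
  have h₁ : x * exp (-(3 / 4 * x)) ≤ y :=
    calc x * exp (-(3 / 4 * x)) ≤ exp (x / 2) * exp (-(3 / 4 * x)) := by gcongr
      _ = y := by rw [hy, ← exp_add]; ring_nf
  have h₂ : exp (-(x / 2)) = y ^ 2 := by rw [← exp_nat_mul]; ring_nf
  nlinarith [sq_nonneg (y - 1 / 2)]

lemma two_mul_sqrt_half (t : ℝ) : 2 * √(t / 2) = √2 * √t := by
  rw [← sqrt_mul zero_le_two, ← sqrt_sq zero_le_two, ← sqrt_mul (sq_nonneg 2)]
  ring_nf

lemma integral_one_div_sqrt_mul_exp_le_of_le_half {c m t : ℝ} (hc : 0 ≤ c) (hm : 0 < m)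
    (hmt : m ≤ t / 2) :
    ∫ s in m..t / 2, 1 / √s * exp (-c * (t ^ 2 - s ^ 2))
      ≤ √2 * √t * exp (-(3 / 4 * (c * t ^ 2))) := by
  have ht : 0 < t := by linarith
  have hexponent : ∀ s ∈ Set.Icc m (t / 2), -c * (t ^ 2 - s ^ 2) ≤ -(3 / 4 * (c * t ^ 2)) := by
    intro s hs
    have hs0 : 0 ≤ s := hm.le.trans hs.1
    nlinarith [mul_nonneg (mul_nonneg hc (sub_nonneg.2 hs.2)) (by linarith : 0 ≤ t / 2 + s)]
  calc ∫ s in m..t / 2, 1 / √s * exp (-c * (t ^ 2 - s ^ 2))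
      ≤ ∫ s in m..t / 2, exp (-(3 / 4 * (c * t ^ 2))) * (1 / √s) :=
        intervalIntegral.integral_mono_on hmt
          (intervalIntegrable_one_div_sqrt_mul_exp hm (hm.trans_le hmt) c t)
          ((intervalIntegrable_one_div_sqrt hm (hm.trans_le hmt)).const_mul _)
          fun s hs => by rw [mul_comm]; gcongr; exact hexponent s hs
    _ = exp (-(3 / 4 * (c * t ^ 2))) * (2 * √(t / 2) - 2 * √m) := by
        rw [intervalIntegral.integral_const_mul, integral_one_div_sqrt hm (hm.trans_le hmt)]
    _ ≤ √2 * √t * exp (-(3 / 4 * (c * t ^ 2))) := by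
        rw [mul_comm, ← two_mul_sqrt_half t]
        gcongr
        linarith [sqrt_nonneg m]

lemma integral_one_div_sqrt_mul_exp_le_of_half_le {c t : ℝ} (hc : 0 < c) (ht : 0 < t) :
    ∫ s in t / 2..t, 1 / √s * exp (-c * (t ^ 2 - s ^ 2))
      ≤ √2 / √t * ((1 - exp (-(c * t ^ 2 / 2))) / (c * t)) := by
  have hbound : ∀ s ∈ Set.Icc (t / 2) t,
      1 / √s * exp (-c * (t ^ 2 - s ^ 2)) ≤ √2 / √t * exp (c * t * s - c * t * t) := by
    intro s hs
    have hs0 : 0 < s := by linarith [hs.1]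
    have hsqrt : 1 / √s ≤ √2 / √t := by
      rw [div_le_div_iff₀ (sqrt_pos.2 hs0) (sqrt_pos.2 ht), one_mul, ← sqrt_mul zero_le_two]
      exact sqrt_le_sqrt (by linarith [hs.1])
    gcongr
    nlinarith [mul_nonneg (mul_nonneg hc.le (sub_nonneg.2 hs.2)) hs0.le]
  calc ∫ s in t / 2..t, 1 / √s * exp (-c * (t ^ 2 - s ^ 2))
      ≤ ∫ s in t / 2..t, √2 / √t * exp (c * t * s - c * t * t) :=
        intervalIntegral.integral_mono_on (by linarith)
          (intervalIntegrable_one_div_sqrt_mul_exp (by positivity) ht c t)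
          (Continuous.intervalIntegrable (by fun_prop) _ _) hbound
    _ = √2 / √t * ((1 - exp (-(c * t ^ 2 / 2))) / (c * t)) := by
        rw [intervalIntegral.integral_const_mul, integral_exp_mul_sub_s15 (by positivity)]
        ring_nf

lemma rpow_three_halves {t : ℝ} (ht : 0 ≤ t) : t ^ ((3 : ℝ) / 2) = t * √t := by
  rw [show (3 : ℝ) / 2 = 1 + 1 / 2 by norm_num, rpow_add' ht (by norm_num), rpow_one,
    ← sqrt_eq_rpow]

theorem integral_one_div_sqrt_mul_exp_le {c τ t : ℝ} (hc : 0 < c) (hτ : 0 < τ) (hτt : τ ≤ t) :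
    ∫ s in τ..t, 1 / √s * exp (-c * (t ^ 2 - s ^ 2)) ≤ 2 / (c * t ^ ((3 : ℝ) / 2)) := by
  have ht : 0 < t := hτ.trans_le hτt
  set m := min τ (t / 2)
  have hm : 0 < m := lt_min hτ (half_pos ht)
  set x := c * t ^ 2
  have hsum : √2 * √t * exp (-(3 / 4 * x)) + √2 / √t * ((1 - exp (-(x / 2))) / (c * t))
      = √2 / (c * t ^ ((3 : ℝ) / 2)) * (x * exp (-(3 / 4 * x)) + (1 - exp (-(x / 2)))) := by
    have hsq : √t ^ 2 = t := sq_sqrt ht.le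
    rw [rpow_three_halves ht.le]
    field_simp
    rw [hsq]
    ring
  calc ∫ s in τ..t, 1 / √s * exp (-c * (t ^ 2 - s ^ 2))
      ≤ ∫ s in m..t, 1 / √s * exp (-c * (t ^ 2 - s ^ 2)) :=
        intervalIntegral.integral_mono_interval (min_le_left _ _) hτt le_rfl
          (Filter.Eventually.of_forall fun s => by positivity)
          (intervalIntegrable_one_div_sqrt_mul_exp hm ht c t)
    _ = (∫ s in m..t / 2, 1 / √s * exp (-c * (t ^ 2 - s ^ 2)))
          + ∫ s in t / 2..t, 1 / √s * exp (-c * (t ^ 2 - s ^ 2)) :=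
        (intervalIntegral.integral_add_adjacent_intervals
          (intervalIntegrable_one_div_sqrt_mul_exp hm (half_pos ht) c t)
          (intervalIntegrable_one_div_sqrt_mul_exp (half_pos ht) ht c t)).symm
    _ ≤ √2 * √t * exp (-(3 / 4 * x)) + √2 / √t * ((1 - exp (-(x / 2))) / (c * t)) :=
        add_le_add (integral_one_div_sqrt_mul_exp_le_of_le_half hc.le hm (min_le_right _ _))
          (integral_one_div_sqrt_mul_exp_le_of_half_le hc ht)
    _ ≤ √2 / (c * t ^ ((3 : ℝ) / 2)) * (5 / 4) := by
        rw [hsum]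
        gcongr
        exact mul_exp_neg_add_one_sub_exp_neg_le (by positivity)
    _ ≤ 2 / (c * t ^ ((3 : ℝ) / 2)) := by
        rw [div_mul_eq_mul_div]
        gcongr
        nlinarith [sq_sqrt (zero_le_two : (0 : ℝ) ≤ 2), sqrt_nonneg 2]

/-- Estimate (5.68): `∫_τ^t s^{-1/2} e^{-a₀(t²-s²)/(4ε)} ds ≤ (8/a₀) ε t^{-3/2}`. -/
theorem stmt15 (a₀ ε τ t : ℝ) (ha : 0 < a₀) (hε : 0 < ε)
    (hτ : Real.sqrt ε ≤ τ) (ht : τ ≤ t) :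
    (∫ s in τ..t, (1 / Real.sqrt s) * Real.exp (-a₀ * (t ^ 2 - s ^ 2) / (4 * ε)))
      ≤ (8 / a₀) * ε / t ^ ((3:ℝ) / 2) := by
  have hexponent : ∀ s : ℝ,
      -a₀ * (t ^ 2 - s ^ 2) / (4 * ε) = -(a₀ / (4 * ε)) * (t ^ 2 - s ^ 2) := fun s => by ring
  have hconst : 8 / a₀ * ε = 2 / (a₀ / (4 * ε)) := by field_simp; ring
  simp only [hexponent]
  rw [hconst, div_div]
  exact integral_one_div_sqrt_mul_exp_le (by positivity) ((sqrt_pos.2 hε).trans_le hτ) ht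
end

section
/- Let ν, ε > 0 and √(2ε/ν) ≤ τ ≤ t. Then there is a universal constant C (independent of ν, ε, τ, t) such that ∫_τ^t s^{−2} e^{−ν(t²−s²)/(2ε)} ds ≤ (C/ν)·(ε/t³)·(1 + ξ^{3/2} e^{−ξ/2}/√ξ₀), where ξ = νt²/(2ε) and ξ₀ = ντ²/(2ε); in particular, since t³ e^{−νt²/(4ε)} ≤ (6ε/ν)^{3/2} e^{−3/2} for all t ≥ 0, the whole integral is bounded by a constant (depending only on ν) times ε/t³. -/
/-!
Write `a = ν / (2ε)`, so that `√(2ε/ν) ≤ τ` says `1 ≤ aτ²`; we show the integral is at most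
`8 / (a t³) = 16ε / (νt³)`, which gives both claims since the factor `1 + ξ^{3/2} e^{-ξ/2}/√ξ₀`
is at least `1`. On `[t/2, t]` we use `s⁻² ≤ 8s/t³`, and `s e^{-a(t²-s²)}` integrates exactly to
at most `1/(2a)`. On `[τ, t/2]` the integrand is at most `a e^{-3at²/4}`, so that piece is at most
`a t e^{-3at²/4} = (at²)² e^{-3at²/4} / (at³)`, and `x² e^{-cx} ≤ 2/c²`.
-/

open Real MeasureTheory

theorem sq_mul_exp_neg_mul_le {c x : ℝ} (hc : 0 < c) (hx : 0 ≤ x) :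
    x ^ 2 * exp (-(c * x)) ≤ 2 / c ^ 2 := by
  have h := pow_div_factorial_le_exp (c * x) (by positivity) 2
  rw [le_div_iff₀ (by positivity), exp_neg]
  rw [Nat.factorial_two, Nat.cast_ofNat, div_le_iff₀ two_pos] at h
  calc x ^ 2 * (exp (c * x))⁻¹ * c ^ 2 = (c * x) ^ 2 * (exp (c * x))⁻¹ := by ring
    _ ≤ exp (c * x) * 2 * (exp (c * x))⁻¹ := by gcongr
    _ = 2 := by field_simp

theorem intervalIntegrable_inv_sq_mul_exp {a t b c : ℝ} (hb : 0 < b) (hbc : b ≤ c) :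
    IntervalIntegrable (fun s => 1 / s ^ 2 * exp (-a * (t ^ 2 - s ^ 2))) volume b c := by
  refine ContinuousOn.intervalIntegrable fun s hs => ?_
  rw [Set.uIcc_of_le hbc] at hs
  have : s ^ 2 ≠ 0 := pow_ne_zero 2 (hb.trans_le hs.1).ne'
  exact ContinuousAt.continuousWithinAt (by fun_prop (disch := assumption))

theorem integral_inv_sq_mul_exp_le_of_le_two_mul {a b t : ℝ} (ha : 0 < a) (hb : 0 < b)
    (hbt : b ≤ t) (htb : t ≤ 2 * b) :
    ∫ s in b..t, 1 / s ^ 2 * exp (-a * (t ^ 2 - s ^ 2)) ≤ 4 / (a * t ^ 3) := by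
  have ht : 0 < t := hb.trans_le hbt
  have hderiv : ∀ s, HasDerivAt (fun s => exp (-a * (t ^ 2 - s ^ 2)) / (2 * a))
      (s * exp (-a * (t ^ 2 - s ^ 2))) s := fun s => by
    refine ((((hasDerivAt_pow 2 s).const_sub (t ^ 2)).const_mul (-a)).exp.div_const
      (2 * a)).congr_deriv ?_
    field_simp
    ring
  have hint : ∫ s in b..t, s * exp (-a * (t ^ 2 - s ^ 2))
      = (1 - exp (-a * (t ^ 2 - b ^ 2))) / (2 * a) := by
    rw [intervalIntegral.integral_eq_sub_of_hasDerivAt (fun s _ => hderiv s)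
      (Continuous.intervalIntegrable (by fun_prop) _ _)]
    simp only [sub_self, mul_zero, exp_zero]
    ring
  calc ∫ s in b..t, 1 / s ^ 2 * exp (-a * (t ^ 2 - s ^ 2))
      ≤ ∫ s in b..t, 8 / t ^ 3 * (s * exp (-a * (t ^ 2 - s ^ 2))) := by
        refine intervalIntegral.integral_mono_on hbt (intervalIntegrable_inv_sq_mul_exp hb hbt)
          (Continuous.intervalIntegrable (by fun_prop) _ _) fun s ⟨hbs, _⟩ => ?_
        have hs : 0 < s := hb.trans_le hbs
        rw [← mul_assoc]
        gcongr
        rw [div_le_iff₀ (by positivity), div_mul_eq_mul_div, div_mul_eq_mul_div,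
          le_div_iff₀ (by positivity)]
        nlinarith [pow_le_pow_left₀ ht.le (show t ≤ 2 * s by linarith) 3]
    _ = 8 / t ^ 3 * ((1 - exp (-a * (t ^ 2 - b ^ 2))) / (2 * a)) := by
        rw [intervalIntegral.integral_const_mul, hint]
    _ ≤ 8 / t ^ 3 * (1 / (2 * a)) := by
        gcongr
        linarith [exp_pos (-a * (t ^ 2 - b ^ 2))]
    _ = 4 / (a * t ^ 3) := by field_simp; norm_num

theorem integral_inv_sq_mul_exp_le_of_two_mul_le {a τ b t : ℝ} (ha : 0 < a) (hτ0 : 0 < τ)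
    (hτ : 1 ≤ a * τ ^ 2) (hτb : τ ≤ b) (hbt : 2 * b ≤ t) :
    ∫ s in τ..b, 1 / s ^ 2 * exp (-a * (t ^ 2 - s ^ 2)) ≤ 4 / (a * t ^ 3) := by
  have ht : 0 < t := by linarith
  have hpt : ∀ s ∈ Set.uIoc τ b, ‖1 / s ^ 2 * exp (-a * (t ^ 2 - s ^ 2))‖
      ≤ a * exp (-(3 / 4 * (a * t ^ 2))) := fun s hs => by
    rw [Set.uIoc_of_le hτb] at hs
    have hs0 : 0 < s := hτ0.trans hs.1
    rw [Real.norm_of_nonneg (by positivity)]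
    gcongr
    · rw [div_le_iff₀ (by positivity)]
      nlinarith [pow_le_pow_left₀ hτ0.le hs.1.le 2]
    · nlinarith [pow_le_pow_left₀ hs0.le (show s ≤ t / 2 by linarith [hs.2]) 2]
  calc ∫ s in τ..b, 1 / s ^ 2 * exp (-a * (t ^ 2 - s ^ 2))
      ≤ a * exp (-(3 / 4 * (a * t ^ 2))) * |b - τ| :=
        (le_norm_self _).trans (intervalIntegral.norm_integral_le_of_norm_le_const hpt)
    _ ≤ a * exp (-(3 / 4 * (a * t ^ 2))) * t := by
        rw [abs_of_nonneg (by linarith)]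
        gcongr
        linarith
    _ = (a * t ^ 2) ^ 2 * exp (-(3 / 4 * (a * t ^ 2))) / (a * t ^ 3) := by
        field_simp
    _ ≤ 2 / (3 / 4) ^ 2 / (a * t ^ 3) := by
        gcongr
        exact sq_mul_exp_neg_mul_le (by norm_num) (by positivity)
    _ ≤ 4 / (a * t ^ 3) := by gcongr; norm_num

theorem integral_inv_sq_mul_exp_le {a τ t : ℝ} (ha : 0 < a) (hτ0 : 0 < τ)
    (hτ : 1 ≤ a * τ ^ 2) (hτt : τ ≤ t) :
    ∫ s in τ..t, 1 / s ^ 2 * exp (-a * (t ^ 2 - s ^ 2)) ≤ 8 / (a * t ^ 3) := by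
  have ht : 0 < t := hτ0.trans_le hτt
  rcases le_or_gt t (2 * τ) with hnear | hfar
  · calc _ ≤ 4 / (a * t ^ 3) := integral_inv_sq_mul_exp_le_of_le_two_mul ha hτ0 hτt hnear
      _ ≤ 8 / (a * t ^ 3) := by gcongr; norm_num
  · rw [← intervalIntegral.integral_add_adjacent_intervals
      (intervalIntegrable_inv_sq_mul_exp hτ0 (b := τ) (c := t / 2) (by linarith))
      (intervalIntegrable_inv_sq_mul_exp (by positivity) (by linarith))]
    have hfar := integral_inv_sq_mul_exp_le_of_two_mul_le ha hτ0 hτ (b := t / 2) (t := t)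
      (by linarith) (by linarith)
    have hnear := integral_inv_sq_mul_exp_le_of_le_two_mul ha (b := t / 2) (t := t)
      (by positivity) (by linarith) (by linarith)
    exact (add_le_add hfar hnear).trans_eq (by ring)

theorem integral_inv_sq_mul_exp_div_le {ν ε τ t : ℝ} (hν : 0 < ν) (hε : 0 < ε)
    (hτ : √(2 * ε / ν) ≤ τ) (hτt : τ ≤ t) :
    ∫ s in τ..t, (1 / s ^ 2) * exp (-ν * (t ^ 2 - s ^ 2) / (2 * ε)) ≤ 16 / ν * (ε / t ^ 3) := by
  have hτ0 : 0 < τ := (sqrt_pos.2 (by positivity)).trans_le hτ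
  have hτ' : 1 ≤ ν / (2 * ε) * τ ^ 2 := by
    rw [sqrt_le_left hτ0.le, div_le_iff₀ hν] at hτ
    rw [div_mul_eq_mul_div, le_div_iff₀ (by positivity)]
    linarith
  convert integral_inv_sq_mul_exp_le (by positivity) hτ0 hτ' hτt using 1
  · congr 1
    ext s
    ring_nf
  · field_simp
    ring

/-- Estimate (5.76)–(5.77): there is a universal constant `C` with
`∫_τ^t s⁻² e^{-ν(t²-s²)/(2ε)} ds ≤ (C/ν)(ε/t³)(1 + ξ^{3/2} e^{-ξ/2}/√ξ₀)`,
where `ξ = νt²/(2ε)`, `ξ₀ = ντ²/(2ε)`; in particular, for each `ν` the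
integral is bounded by a constant times `ε/t³`. -/
theorem stmt16 :
    (∃ C > (0:ℝ), ∀ ν ε τ t : ℝ, 0 < ν → 0 < ε →
      Real.sqrt (2 * ε / ν) ≤ τ → τ ≤ t →
      (∫ s in τ..t, (1 / s ^ 2) * Real.exp (-ν * (t ^ 2 - s ^ 2) / (2 * ε)))
        ≤ (C / ν) * (ε / t ^ 3) *
            (1 + (ν * t ^ 2 / (2 * ε)) ^ ((3:ℝ) / 2)
                  * Real.exp (-(ν * t ^ 2 / (2 * ε)) / 2)
                  / Real.sqrt (ν * τ ^ 2 / (2 * ε))))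
    ∧ (∀ ν : ℝ, 0 < ν → ∃ C' > (0:ℝ), ∀ ε τ t : ℝ, 0 < ε →
      Real.sqrt (2 * ε / ν) ≤ τ → τ ≤ t →
      (∫ s in τ..t, (1 / s ^ 2) * Real.exp (-ν * (t ^ 2 - s ^ 2) / (2 * ε)))
        ≤ C' * (ε / t ^ 3)) := by
  refine ⟨⟨16, by norm_num, fun ν ε τ t hν hε hτ hτt => ?_⟩,
    fun ν hν => ⟨16 / ν, by positivity, fun ε τ t hε hτ hτt =>
      integral_inv_sq_mul_exp_div_le hν hε hτ hτt⟩⟩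
  have ht : 0 < t := ((sqrt_pos.2 (by positivity)).trans_le hτ).trans_le hτt
  refine (integral_inv_sq_mul_exp_div_le hν hε hτ hτt).trans
    (le_mul_of_one_le_right (by positivity) (le_add_of_nonneg_right ?_))
  positivity
end

section
/- Let f : ℝ × [t₀, T] → ℝ be continuous, locally Lipschitz in x, odd in x (f(−x,t) = −f(x,t)), and suppose f(x,t)/x ≥ a₀(t) for all 0 < x ≤ x̃(t) and t ∈ [t₀, T], where a₀ is continuous and x̃ is a positive continuous function. Let x_s solve the (random or deterministic) integral equation x_s = x₀ + (1/ε)∫_{t₀}^s f(x_u, u) du + noise-term N_s, and let x⁰_s solve x⁰_s = x₀ + (1/ε)∫_{t₀}^s a₀(u) x⁰_u du + N_s with the same inhomogeneity N_s (pathwise, N continuous, N_{t₀} = 0). If 0 < x_s < x̃(s) for all s ∈ [t₀, t], then x_s ≥ x⁰_s for all s ∈ [t₀, t]. -/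
open Real MeasureTheory Set

/-! With `g(u) = f(x_u, u) - a₀(u) x_u ≥ 0`, the difference `z = x - x⁰` satisfies
`ε z' = g + a₀ z ≥ a₀ z` with `z(t₀) = 0`, the noise `N` cancelling. The integrating factor
`exp (-(1/ε) ∫ a₀)` turns `z' ≥ (a₀/ε) z` into monotonicity of `z · exp (-(1/ε) ∫ a₀)`,
which starts at `0`; hence `z ≥ 0`. -/

theorem hasDerivAt_of_eqOn_intervalIntegral {a b s : ℝ} {F G : ℝ → ℝ}
    (hG : ContinuousOn G (Icc a b)) (hF : ∀ u ∈ Icc a b, F u = ∫ v in a..u, G v)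
    (hs : s ∈ Ioo a b) : HasDerivAt F (G s) s := by
  have hderiv : HasDerivAt (fun u => ∫ v in a..u, G v) (G s) s :=
    intervalIntegral.integral_hasDerivAt_right
      ((hG.mono (Icc_subset_Icc_right hs.2.le)).intervalIntegrable_of_Icc hs.1.le)
      ((hG.mono Ioo_subset_Icc_self).stronglyMeasurableAtFilter isOpen_Ioo s hs)
      (hG.continuousAt (Icc_mem_nhds hs.1 hs.2))
  refine hderiv.congr_of_eventuallyEq ?_
  filter_upwards [Icc_mem_nhds hs.1 hs.2] with u hu using hF u hu

theorem nonneg_of_mul_self_le_deriv {a b : ℝ} {c z z' : ℝ → ℝ}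
    (hc : ContinuousOn c (Icc a b)) (hz : ContinuousOn z (Icc a b))
    (hz' : ∀ s ∈ Ioo a b, HasDerivAt z (z' s) s) (hle : ∀ s ∈ Ioo a b, c s * z s ≤ z' s)
    (ha : 0 ≤ z a) : ∀ s ∈ Icc a b, 0 ≤ z s := by
  intro s hs
  have hab : a ≤ b := hs.1.trans hs.2
  set C : ℝ → ℝ := fun u => ∫ v in a..u, c v
  have hCc : ContinuousOn C (Icc a b) := by
    simpa only [uIcc_of_le hab] using
      intervalIntegral.continuousOn_primitive_interval (μ := volume)
        (hc.integrableOn_Icc.mono_set (uIcc_of_le hab).subset)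
  set Φ : ℝ → ℝ := fun u => z u * exp (-C u)
  have hΦ' : ∀ u ∈ Ioo a b, HasDerivAt Φ ((z' u - c u * z u) * exp (-C u)) u := by
    intro u hu
    refine ((hz' u hu).mul
      (hasDerivAt_of_eqOn_intervalIntegral (F := C) hc (fun _ _ => rfl) hu).neg.exp).congr_deriv ?_
    simp only [Pi.neg_apply]
    ring
  have hmono : MonotoneOn Φ (Icc a b) := by
    refine monotoneOn_of_hasDerivWithinAt_nonneg (f' := fun u => (z' u - c u * z u) * exp (-C u))
      (convex_Icc a b) (hz.mul hCc.neg.rexp) (fun u hu => ?_) (fun u hu => ?_) <;>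
      rw [interior_Icc] at hu
    · exact (hΦ' u hu).hasDerivWithinAt
    · exact mul_nonneg (sub_nonneg.mpr (hle u hu)) (exp_pos _).le
  have hΦa : Φ a = z a := by simp [Φ, C]
  have hΦs : 0 ≤ Φ s := hΦa ▸ ha |>.trans (hmono (left_mem_Icc.mpr hab) hs hs.1)
  exact nonneg_of_mul_nonneg_left hΦs (exp_pos _)

theorem stmt17_general (t₀ T t ε : ℝ) (ht₀ : t₀ ≤ t) (htT : t ≤ T) (hε : 0 < ε)
    (f : ℝ → ℝ → ℝ) (a₀ xtil : ℝ → ℝ) (x x0 N : ℝ → ℝ) (xinit : ℝ)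
    (hfc : Continuous fun p : ℝ × ℝ => f p.1 p.2)
    (ha₀ : ContinuousOn a₀ (Set.Icc t₀ T))
    (hcomp : ∀ s ∈ Set.Icc t₀ T, ∀ y : ℝ, 0 < y → y ≤ xtil s → a₀ s * y ≤ f y s)
    (hxc : Continuous x) (hx0c : Continuous x0)
    (hx : ∀ s ∈ Set.Icc t₀ t,
      x s = xinit + (1 / ε) * (∫ u in t₀..s, f (x u) u) + N s)
    (hx0 : ∀ s ∈ Set.Icc t₀ t,
      x0 s = xinit + (1 / ε) * (∫ u in t₀..s, a₀ u * x0 u) + N s)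
    (hin : ∀ s ∈ Set.Icc t₀ t, 0 < x s ∧ x s < xtil s) :
    ∀ s ∈ Set.Icc t₀ t, x0 s ≤ x s := by
  have hIcc : Icc t₀ t ⊆ Icc t₀ T := Icc_subset_Icc_right htT
  have ha₀x0 : ContinuousOn (fun u => a₀ u * x0 u) (Icc t₀ t) :=
    (ha₀.mono hIcc).mul hx0c.continuousOn
  have hfx : ContinuousOn (fun u => f (x u) u) (Icc t₀ t) :=
    (hfc.comp (hxc.prodMk continuous_id)).continuousOn
  have hdiff : ∀ u ∈ Icc t₀ t,
      x u - x0 u = ∫ v in t₀..u, ε⁻¹ * (f (x v) v - a₀ v * x0 v) := by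
    intro u hu
    have hsub : Icc t₀ u ⊆ Icc t₀ t := Icc_subset_Icc_right hu.2
    rw [hx u hu, hx0 u hu, intervalIntegral.integral_const_mul,
      intervalIntegral.integral_sub ((hfx.mono hsub).intervalIntegrable_of_Icc hu.1)
        ((ha₀x0.mono hsub).intervalIntegrable_of_Icc hu.1)]
    ring
  have hz : ∀ s ∈ Icc t₀ t, 0 ≤ x s - x0 s := by
    refine nonneg_of_mul_self_le_deriv (c := fun u => ε⁻¹ * a₀ u)
      (continuousOn_const.mul (ha₀.mono hIcc)) (hxc.sub hx0c).continuousOn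
      (fun s hs => hasDerivAt_of_eqOn_intervalIntegral
        (continuousOn_const.mul (hfx.sub ha₀x0)) hdiff hs)
      (fun s hs => ?_) (by simp [hdiff t₀ (left_mem_Icc.mpr ht₀)])
    obtain ⟨hxpos, hxlt⟩ := hin s (Ioo_subset_Icc_self hs)
    have hf : a₀ s * x s ≤ f (x s) s :=
      hcomp s (hIcc (Ioo_subset_Icc_self hs)) (x s) hxpos hxlt.le
    calc ε⁻¹ * a₀ s * (x s - x0 s) = ε⁻¹ * (a₀ s * x s - a₀ s * x0 s) := by ring
      _ ≤ ε⁻¹ * (f (x s) s - a₀ s * x0 s) :=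
        mul_le_mul_of_nonneg_left (sub_le_sub_right hf _) (inv_nonneg.mpr hε.le)
  exact fun s hs => sub_nonneg.mp (hz s hs)

/-- Pathwise comparison underlying Lemma 4.5: if `f(x,u) ≥ a₀(u) x` for
`0 < x ≤ x̃(u)`, and `x`, `x⁰` solve the integral equations with the same
inhomogeneity `N`, then `x_s ≥ x⁰_s` as long as `0 < x_s < x̃(s)`. -/
theorem stmt17 (t₀ T t ε : ℝ) (ht₀ : t₀ ≤ t) (htT : t ≤ T) (hε : 0 < ε)
    (f : ℝ → ℝ → ℝ) (a₀ xtil : ℝ → ℝ) (x x0 N : ℝ → ℝ) (xinit : ℝ)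
    (hfc : Continuous fun p : ℝ × ℝ => f p.1 p.2)
    (hflip : ∀ s : ℝ, LocallyLipschitz fun y => f y s)
    (hodd : ∀ (y s : ℝ), f (-y) s = -f y s)
    (ha₀ : ContinuousOn a₀ (Set.Icc t₀ T))
    (hxtilc : ContinuousOn xtil (Set.Icc t₀ T))
    (hxtilpos : ∀ s ∈ Set.Icc t₀ T, 0 < xtil s)
    (hcomp : ∀ s ∈ Set.Icc t₀ T, ∀ y : ℝ, 0 < y → y ≤ xtil s → a₀ s * y ≤ f y s)
    (hN : Continuous N) (hN0 : N t₀ = 0)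
    (hxc : Continuous x) (hx0c : Continuous x0)
    (hx : ∀ s ∈ Set.Icc t₀ t,
      x s = xinit + (1 / ε) * (∫ u in t₀..s, f (x u) u) + N s)
    (hx0 : ∀ s ∈ Set.Icc t₀ t,
      x0 s = xinit + (1 / ε) * (∫ u in t₀..s, a₀ u * x0 u) + N s)
    (hin : ∀ s ∈ Set.Icc t₀ t, 0 < x s ∧ x s < xtil s) :
    ∀ s ∈ Set.Icc t₀ t, x0 s ≤ x s :=
  stmt17_general t₀ T t ε ht₀ htT hε f a₀ xtil x x0 N xinit hfc ha₀ hcomp hxc hx0c hx hx0 hin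
end
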